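/- arXiv:2009.10927 — 7 statements merged into one kernel-verified Lean document; each statement's English description precedes it below -/
import Mathlib

section
/- Let ζ > 1 and let (Λ_e)_{e∈E} be a family of stochastic processes on a common probability space (Ω, P), each with almost surely nondecreasing paths and Λ_e(0) = 0, satisfying condition (DIFF) uniformly with exponent ζ. Then for every ε > 0 there exists a finite constant C = C(ε) such that for every t ≥ 2 and every e ∈ E, P( there exists a real s ≥ t with |Λ_e(s) − s| > s^{1/2 + ε} ) ≤ C · t^{−(ζ−1)}. In other words, sup_{e∈E} P( sup_{s ≥ t} |Λ_e(s) − s| · s^{−1/2−ε} > 1 ) ∈ O(t^{−(ζ−1)}) as t → ∞. -/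
open MeasureTheory Filter

set_option maxHeartbeats 1000000

/-- MVT step: for `x ≥ 1` and `p > 0`, `x^(-(p+1)) ≤ (2^(p+1)/p) * (x^(-p) - (x+1)^(-p))`. -/
lemma mvt_step (p : ℝ) (hp : 0 < p) (x : ℝ) (hx : 1 ≤ x) :
    x ^ (-(p+1)) ≤ (2 ^ (p+1) / p) * (x ^ (-p) - (x+1) ^ (-p)) := by
  have hx0 : (0:ℝ) < x := lt_of_lt_of_le one_pos hx
  obtain ⟨y, hy, hslope⟩ := exists_hasDerivAt_eq_slope (fun y : ℝ => y ^ (-p))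
    (fun y : ℝ => (-p) * y ^ (-p - 1)) (by linarith : x < x + 1)
    (by
      apply ContinuousOn.rpow_const continuousOn_id
      intro y hy
      exact Or.inl (show y ≠ 0 from ne_of_gt (lt_of_lt_of_le hx0 hy.1)))
    (fun y hy => Real.hasDerivAt_rpow_const (Or.inl (by nlinarith [hy.1] : y ≠ 0)))
  have hy0 : (0:ℝ) < y := lt_trans hx0 hy.1
  -- from slope: x^(-p) - (x+1)^(-p) = p * y^(-p-1)
  have hdiff : x ^ (-p) - (x+1) ^ (-p) = p * y ^ (-p-1) := by
    have : (-p) * y ^ (-p-1) = ((x+1) ^ (-p) - x ^ (-p)) / (x + 1 - x) := hslope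
    rw [show x + 1 - x = 1 by ring, div_one] at this
    linarith [this]
  have hy2x : y ≤ 2 * x := by nlinarith [hy.2]
  have h2x : y ^ (-p-1) ≥ (2*x) ^ (-p-1) :=
    Real.rpow_le_rpow_of_nonpos hy0 hy2x (by linarith)
  have hmul : (2*x) ^ (-p-1) = 2 ^ (-p-1) * x ^ (-p-1) :=
    Real.mul_rpow (by norm_num) (le_of_lt hx0)
  have key : x ^ (-p) - (x+1) ^ (-p) ≥ p * (2 ^ (-p-1) * x ^ (-p-1)) := by
    rw [hdiff]
    have := le_trans (le_of_eq hmul.symm) h2x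
    nlinarith [this]
  have h2pos : (0:ℝ) < (2:ℝ) ^ (p+1) := Real.rpow_pos_of_pos (by norm_num) _
  have hinv : (2:ℝ) ^ (-p-1) = ((2:ℝ) ^ (p+1))⁻¹ := by
    rw [show -p-1 = -(p+1) by ring, Real.rpow_neg (by norm_num)]
  rw [ge_iff_le, hinv] at key
  have := mul_le_mul_of_nonneg_left key (le_of_lt (div_pos h2pos hp))
  have heq : (2 ^ (p+1) / p) * (p * (((2:ℝ) ^ (p+1))⁻¹ * x ^ (-p-1))) = x ^ (-p-1) := by
    field_simp
  rw [show -(p+1) = -p-1 by ring]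
  linarith [this, heq.symm.le]

/-- Telescoping sum of `((N+k)^(-p) - (N+k+1)^(-p))` equals `N^(-p)`. -/
lemma tele_hasSum (p : ℝ) (hp : 0 < p) (N : ℕ) (hN : 1 ≤ N) :
    HasSum (fun k : ℕ => ((N:ℝ)+k) ^ (-p) - ((N:ℝ)+k+1) ^ (-p)) ((N:ℝ) ^ (-p)) := by
  set g : ℕ → ℝ := fun k => ((N:ℝ)+k) ^ (-p) with hg
  have hNpos : (0:ℝ) < N := by exact_mod_cast hN
  have hnonneg : ∀ k : ℕ, 0 ≤ g k - g (k+1) := by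
    intro k
    have : ((N:ℝ)+(k+1)) ^ (-p) ≤ ((N:ℝ)+k) ^ (-p) :=
      Real.rpow_le_rpow_of_nonpos (by positivity) (by push_cast; linarith) (by linarith)
    simp only [hg]
    push_cast
    push_cast at this
    linarith
  have hfun : (fun k : ℕ => ((N:ℝ)+k) ^ (-p) - ((N:ℝ)+k+1) ^ (-p))
      = fun k => g k - g (k+1) := by
    funext k
    simp only [hg]
    push_cast
    ring_nf
  rw [hfun, hasSum_iff_tendsto_nat_of_nonneg hnonneg]
  have hsum : ∀ n : ℕ, ∑ i ∈ Finset.range n, (g i - g (i+1)) = g 0 - g n :=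
    fun n => Finset.sum_range_sub' g n
  have hg0 : g 0 = (N:ℝ) ^ (-p) := by simp [hg]
  have htend : Tendsto g atTop (nhds 0) := by
    have h1 : Tendsto (fun k : ℕ => (N:ℝ) + k) atTop atTop :=
      tendsto_atTop_add_const_left _ _ tendsto_natCast_atTop_atTop
    exact (tendsto_rpow_neg_atTop hp).comp h1
  have : Tendsto (fun n => g 0 - g n) atTop (nhds (g 0 - 0)) :=
    tendsto_const_nhds.sub htend
  rw [sub_zero] at this
  rw [← hg0]
  exact Tendsto.congr (fun n => (hsum n).symm) this

/-- Uniform boundedness of the environment deviations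
(Lemma "Uniform boundedness of jump rates"). If a family `Λ e` of a.s.
nondecreasing processes with `Λ e 0 = 0` satisfies condition (DIFF)
uniformly with exponent `ζ > 1`, then for every `ε > 0` there is a
constant `C` such that for all `t ≥ 2` and every edge `e`,
`P(∃ s ≥ t, |Λ_e(s) − s| > s^{1/2+ε}) ≤ C · t^{-(ζ-1)}`. -/
theorem uniform_deviation_bound
    {Ω : Type*} [MeasurableSpace Ω] (P : Measure Ω) [IsProbabilityMeasure P]
    {E : Type*} (ζ : ℝ) (hζ : 1 < ζ)
    (Λ : E → ℝ → Ω → ℝ)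
    (hmono : ∀ e : E, ∀ᵐ ω ∂P, MonotoneOn (fun t => Λ e t ω) (Set.Ici (0 : ℝ)))
    (hzero : ∀ e : E, ∀ᵐ ω ∂P, Λ e 0 ω = 0)
    (hDIFF : ∀ ε : ℝ, 0 < ε → ∃ c : ℝ, ∀ a b : ℝ, 0 ≤ a → a ≤ b → ∀ e : E,
      P {ω | |Λ e b ω - Λ e a ω - (b - a)| > (b - a) ^ ((1 : ℝ) / 2 + ε)}
        ≤ ENNReal.ofReal (c * (b - a) ^ (-ζ))) :
    ∀ ε : ℝ, 0 < ε → ∃ C : ℝ, ∀ t : ℝ, 2 ≤ t → ∀ e : E,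
      P {ω | ∃ s : ℝ, t ≤ s ∧ |Λ e s ω - s| > s ^ ((1 : ℝ) / 2 + ε)}
        ≤ ENNReal.ofReal (C * t ^ (-(ζ - 1))) := by
  intro ε hε
  obtain ⟨c, hc⟩ := hDIFF (ε/2) (by positivity)
  set p := ζ - 1 with hpdef
  have hp : 0 < p := by rw [hpdef]; linarith
  set c' := max c 1 with hc'def
  have hc'pos : 0 < c' := lt_of_lt_of_le one_pos (le_max_right _ _)
  set K := c' * (2 ^ ζ / p) with hKdef
  have hKpos : 0 < K := by
    apply mul_pos hc'pos
    exact div_pos (Real.rpow_pos_of_pos (by norm_num) _) hp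
  set T : ℝ := max 2 ((1 + 2 ^ (1+ε)) ^ (2/ε)) with hTdef
  have hT2 : (2:ℝ) ≤ T := le_max_left _ _
  refine ⟨max (K * 2 ^ p) (T ^ p), ?_⟩
  intro t ht e
  set C := max (K * 2 ^ p) (T ^ p) with hCdef
  have ht0 : (0:ℝ) < t := by linarith
  by_cases hcase : t ≤ T
  · -- small t: bound probability by 1
    have h2 : t ^ p ≤ T ^ p := Real.rpow_le_rpow (le_of_lt ht0) hcase hp.le
    have h3 : t ^ p ≤ C := le_trans h2 (le_max_right _ _)
    have h4 : (0:ℝ) < t ^ (-p) := Real.rpow_pos_of_pos ht0 _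
    have h5 : t ^ p * t ^ (-p) = 1 := by
      rw [← Real.rpow_add ht0]; simp
    have h1 : (1:ℝ) ≤ C * t ^ (-p) := by
      have h6 := mul_le_mul_of_nonneg_right h3 h4.le
      rw [h5] at h6
      exact h6
    calc P _ ≤ 1 := prob_le_one
      _ = ENNReal.ofReal 1 := by simp
      _ ≤ ENNReal.ofReal (C * t ^ (-p)) := ENNReal.ofReal_le_ofReal h1
  · push_neg at hcase
    have htT1 : (1 + 2 ^ (1+ε)) ^ (2/ε) ≤ t := le_trans (le_max_right _ _) hcase.le
    set N := Nat.floor t with hNdef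
    have hN1 : 1 ≤ N := Nat.le_floor (by exact_mod_cast (by linarith : (1:ℝ) ≤ t))
    have hN1R : (1:ℝ) ≤ N := by exact_mod_cast hN1
    have hNt : (N:ℝ) ≤ t := Nat.floor_le ht0.le
    have hNhalf : t/2 ≤ (N:ℝ) := by
      have := Nat.sub_one_lt_floor t
      rw [← hNdef] at this
      linarith
    set A : ℕ → Set Ω := fun k =>
      {ω | |Λ e ((N:ℝ)+k) ω - Λ e 0 ω - ((N:ℝ)+k)| > ((N:ℝ)+k) ^ ((1:ℝ)/2 + ε/2)} with hA
    have hAk : ∀ k : ℕ, P (A k) ≤ ENNReal.ofReal (c * ((N:ℝ)+k) ^ (-ζ)) := by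
      intro k
      have := hc 0 ((N:ℝ)+k) le_rfl (by positivity) e
      simp only [sub_zero] at this
      exact this
    set Bad : Set Ω :=
      {ω | ¬(MonotoneOn (fun u => Λ e u ω) (Set.Ici (0:ℝ)) ∧ Λ e 0 ω = 0)} with hBadDef
    have hBad : P Bad = 0 := ae_iff.mp ((hmono e).and (hzero e))
    have hq0 : (0:ℝ) ≤ (1:ℝ)/2 + ε/2 := by linarith
    have hcover : {ω | ∃ s : ℝ, t ≤ s ∧ |Λ e s ω - s| > s ^ ((1:ℝ)/2 + ε)}
        ⊆ (⋃ k, A k) ∪ Bad := by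
      intro ω hω
      by_cases hgood : MonotoneOn (fun u => Λ e u ω) (Set.Ici (0:ℝ)) ∧ Λ e 0 ω = 0
      · left
        obtain ⟨hm, h0⟩ := hgood
        obtain ⟨s, hts, hdev⟩ := hω
        have hs2 : (2:ℝ) ≤ s := le_trans ht hts
        have hs0 : (0:ℝ) < s := by linarith
        set n := Nat.floor s with hndef
        have hns : (n:ℝ) ≤ s := Nat.floor_le hs0.le
        have hsn1 : s < (n:ℝ) + 1 := Nat.lt_floor_add_one s
        have hNn : N ≤ n := Nat.floor_le_floor hts
        by_contra hnot
        simp only [Set.mem_iUnion, not_exists] at hnot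
        have hk1 := hnot (n - N)
        have hk2 := hnot (n - N + 1)
        have hcastsub : ((n - N : ℕ) : ℝ) = (n:ℝ) - N := by
          rw [Nat.cast_sub hNn]
        have hcast1 : (N:ℝ) + ((n - N : ℕ):ℝ) = (n:ℝ) := by rw [hcastsub]; ring
        have hcast2 : (N:ℝ) + ((n - N + 1 : ℕ):ℝ) = (n:ℝ) + 1 := by
          push_cast [hcastsub]; ring
        simp only [hA, Set.mem_setOf_eq, not_lt] at hk1 hk2
        rw [hcast1] at hk1
        rw [hcast2] at hk2
        simp only [h0, sub_zero] at hk1 hk2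
        -- monotonicity
        have hmn : Λ e (n:ℝ) ω ≤ Λ e s ω :=
          hm (Set.mem_Ici.mpr (by positivity)) (Set.mem_Ici.mpr hs0.le) hns
        have hmn1 : Λ e s ω ≤ Λ e ((n:ℝ)+1) ω :=
          hm (Set.mem_Ici.mpr hs0.le) (Set.mem_Ici.mpr (by positivity)) hsn1.le
        have hb1 := abs_le.mp hk1
        have hb2 := abs_le.mp hk2
        have hnq : (n:ℝ) ^ ((1:ℝ)/2 + ε/2) ≤ ((n:ℝ)+1) ^ ((1:ℝ)/2 + ε/2) :=
          Real.rpow_le_rpow (by positivity) (by linarith) hq0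
        have habs : |Λ e s ω - s| ≤ 1 + ((n:ℝ)+1) ^ ((1:ℝ)/2 + ε/2) := by
          rw [abs_le]
          constructor
          · linarith [hb1.1, hmn, hns, hnq]
          · linarith [hb2.2, hmn1, hns]
        -- analytic bound
        have e1 : (1:ℝ) ≤ s ^ ((1:ℝ)/2 + ε/2) := Real.one_le_rpow (by linarith) hq0
        have e2 : ((n:ℝ)+1) ^ ((1:ℝ)/2 + ε/2) ≤ (2*s) ^ ((1:ℝ)/2 + ε/2) :=
          Real.rpow_le_rpow (by positivity) (by linarith) hq0
        have e3 : (2*s) ^ ((1:ℝ)/2 + ε/2) = 2 ^ ((1:ℝ)/2 + ε/2) * s ^ ((1:ℝ)/2 + ε/2) :=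
          Real.mul_rpow (by norm_num) hs0.le
        have e4 : (2:ℝ) ^ ((1:ℝ)/2 + ε/2) ≤ 2 ^ (1+ε) :=
          Real.rpow_le_rpow_of_exponent_le (by norm_num) (by linarith)
        have e5 : s ^ ((1:ℝ)/2 + ε) = s ^ (ε/2) * s ^ ((1:ℝ)/2 + ε/2) := by
          rw [← Real.rpow_add hs0]; ring_nf
        have e6 : (1:ℝ) + 2 ^ (1+ε) ≤ s ^ (ε/2) := by
          have hB0 : (0:ℝ) ≤ 1 + 2 ^ (1+ε) := by positivity
          have h7 : (((1:ℝ) + 2 ^ (1+ε)) ^ (2/ε)) ^ (ε/2) ≤ s ^ (ε/2) :=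
            Real.rpow_le_rpow (by positivity) (le_trans htT1 hts) (by positivity)
          have h8 : (((1:ℝ) + 2 ^ (1+ε)) ^ (2/ε)) ^ (ε/2)
              = ((1:ℝ) + 2 ^ (1+ε)) ^ ((2/ε) * (ε/2)) :=
            (Real.rpow_mul hB0 _ _).symm
          have h9 : (2/ε) * (ε/2) = 1 := by field_simp
          rw [h8, h9, Real.rpow_one] at h7
          exact h7
        have hsq0 : (0:ℝ) ≤ s ^ ((1:ℝ)/2 + ε/2) := by positivity
        have final : |Λ e s ω - s| ≤ s ^ ((1:ℝ)/2 + ε) := by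
          have h10 : 1 + ((n:ℝ)+1) ^ ((1:ℝ)/2 + ε/2)
              ≤ (1 + 2 ^ (1+ε)) * s ^ ((1:ℝ)/2 + ε/2) := by
            have h10a : (2:ℝ) ^ ((1:ℝ)/2 + ε/2) * s ^ ((1:ℝ)/2 + ε/2)
                ≤ 2 ^ (1+ε) * s ^ ((1:ℝ)/2 + ε/2) :=
              mul_le_mul_of_nonneg_right e4 hsq0
            linarith [e1, e2, e3.le, e3.ge, h10a]
          have h11 : (1 + 2 ^ (1+ε)) * s ^ ((1:ℝ)/2 + ε/2)
              ≤ s ^ (ε/2) * s ^ ((1:ℝ)/2 + ε/2) :=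
            mul_le_mul_of_nonneg_right e6 hsq0
          rw [e5]
          linarith
        exact absurd hdev (not_lt.mpr final)
      · right; exact hgood
    -- measure computation
    have hζp : p + 1 = ζ := by rw [hpdef]; ring
    calc P {ω | ∃ s : ℝ, t ≤ s ∧ |Λ e s ω - s| > s ^ ((1:ℝ)/2 + ε)}
        ≤ P ((⋃ k, A k) ∪ Bad) := measure_mono hcover
      _ ≤ P (⋃ k, A k) + P Bad := measure_union_le _ _
      _ = P (⋃ k, A k) := by rw [hBad, add_zero]
      _ ≤ ∑' k, P (A k) := measure_iUnion_le _
      _ ≤ ∑' k : ℕ, ENNReal.ofReal (K * (((N:ℝ)+k) ^ (-p) - ((N:ℝ)+k+1) ^ (-p))) := by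
          apply ENNReal.tsum_le_tsum
          intro k
          refine le_trans (hAk k) (ENNReal.ofReal_le_ofReal ?_)
          have hx1 : (1:ℝ) ≤ (N:ℝ) + k := by
            have : (0:ℝ) ≤ (k:ℝ) := Nat.cast_nonneg k
            linarith
          have hmvt := mvt_step p hp ((N:ℝ)+k) hx1
          rw [show -(p+1) = -ζ by rw [hζp]] at hmvt
          rw [show (2:ℝ) ^ (p+1) = 2 ^ ζ by rw [hζp]] at hmvt
          have hxpos : (0:ℝ) ≤ ((N:ℝ)+k) ^ (-ζ) := Real.rpow_nonneg (by linarith) _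
          calc c * ((N:ℝ)+k) ^ (-ζ) ≤ c' * ((N:ℝ)+k) ^ (-ζ) :=
                mul_le_mul_of_nonneg_right (le_max_left c 1) hxpos
            _ ≤ c' * ((2 ^ ζ / p) * (((N:ℝ)+k) ^ (-p) - ((N:ℝ)+k+1) ^ (-p))) :=
                mul_le_mul_of_nonneg_left hmvt hc'pos.le
            _ = K * (((N:ℝ)+k) ^ (-p) - ((N:ℝ)+k+1) ^ (-p)) := by rw [hKdef]; ring
      _ = ENNReal.ofReal (K * (N:ℝ) ^ (-p)) := by
          have hts2 := (tele_hasSum p hp N hN1).mul_left K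
          have hnn : ∀ k : ℕ, 0 ≤ K * (((N:ℝ)+k) ^ (-p) - ((N:ℝ)+k+1) ^ (-p)) := by
            intro k
            apply mul_nonneg hKpos.le
            have : ((N:ℝ)+k+1) ^ (-p) ≤ ((N:ℝ)+k) ^ (-p) :=
              Real.rpow_le_rpow_of_nonpos (by positivity) (by linarith) (by linarith)
            linarith
          rw [← ENNReal.ofReal_tsum_of_nonneg hnn hts2.summable, hts2.tsum_eq]
      _ ≤ ENNReal.ofReal (C * t ^ (-p)) := by
          apply ENNReal.ofReal_le_ofReal
          have h6 : ((N:ℝ))^(-p) ≤ (t/2)^(-p) :=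
            Real.rpow_le_rpow_of_nonpos (by linarith) hNhalf (by linarith)
          have h7 : (t/2)^(-p) = t^(-p) * 2^p := by
            rw [Real.div_rpow ht0.le (by norm_num), Real.rpow_neg (by norm_num : (0:ℝ) ≤ 2)]
            field_simp
          have h8 : (0:ℝ) ≤ t^(-p) := Real.rpow_nonneg ht0.le _
          have h9 : K * (N:ℝ)^(-p) ≤ (K * 2^p) * t^(-p) := by
            rw [h7] at h6
            calc K * (N:ℝ)^(-p) ≤ K * (t^(-p) * 2^p) :=
                  mul_le_mul_of_nonneg_left h6 hKpos.le
              _ = (K * 2^p) * t^(-p) := by ring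
          have h10 : (K * 2^p) * t^(-p) ≤ C * t^(-p) :=
            mul_le_mul_of_nonneg_right (le_max_left _ _) h8
          linarith
end

section
/- Let ζ > 1 and let Λ be a stochastic process on a probability space (Ω, P) with almost surely nondecreasing paths and Λ(0) = 0, satisfying condition (DIFF) with exponent ζ. Then for P-almost every ω, the ratio Λ(t)(ω)/t converges to 1 as the real parameter t tends to infinity. -/
/-!
Taking `a = 0` in (DIFF) with `ε = 1/4` bounds the probability that `|Λ(n) - n| > n ^ (3/4)` by
`c n ^ (-ζ)`, which is summable since `ζ > 1`. By Borel–Cantelli, almost surely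
`|Λ(n) - n| ≤ n ^ (3/4)` for all large integers `n`, so `Λ(n)/n → 1` along the integers;
monotonicity of the paths squeezes `Λ(t)` between `Λ(⌊t⌋)` and `Λ(⌈t⌉)`, which extends the limit
to real `t → ∞`.
-/

open MeasureTheory Filter Topology

theorem tendsto_div_atTop_of_monotoneOn_of_tendsto_nat {f : ℝ → ℝ} {l : ℝ}
    (hf : MonotoneOn f (Set.Ici 0)) (hl : Tendsto (fun n : ℕ => f n / n) atTop (𝓝 l)) :
    Tendsto (fun t => f t / t) atTop (𝓝 l) := by
  have hfloor : Tendsto (fun t : ℝ => f ⌊t⌋₊ / t) atTop (𝓝 l) := by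
    have := (hl.comp tendsto_nat_floor_atTop).mul (tendsto_nat_floor_div_atTop (R := ℝ))
    rw [mul_one] at this
    refine this.congr' ?_
    filter_upwards [eventually_ge_atTop 1] with t ht
    have : (⌊t⌋₊ : ℝ) ≠ 0 := Nat.cast_ne_zero.2 (Nat.floor_pos.2 ht).ne'
    simp [field]
  have hceil : Tendsto (fun t : ℝ => f ⌈t⌉₊ / t) atTop (𝓝 l) := by
    have := (hl.comp tendsto_nat_ceil_atTop).mul (tendsto_nat_ceil_div_atTop (R := ℝ))
    rw [mul_one] at this
    refine this.congr' ?_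
    filter_upwards [eventually_gt_atTop 0] with t ht
    have : (⌈t⌉₊ : ℝ) ≠ 0 := by positivity
    simp [field]
  refine tendsto_of_tendsto_of_tendsto_of_le_of_le' hfloor hceil ?_ ?_ <;>
    filter_upwards [eventually_gt_atTop 0] with t ht <;> gcongr
  · exact hf (Set.mem_Ici.2 (Nat.cast_nonneg _)) ht.le (Nat.floor_le ht.le)
  · exact hf ht.le (Set.mem_Ici.2 (Nat.cast_nonneg _)) (Nat.le_ceil t)

theorem tendsto_div_natCast_of_eventually_abs_sub_le_rpow {u : ℕ → ℝ} {α : ℝ} (hα : α < 1)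
    (hu : ∀ᶠ n : ℕ in atTop, |u n - n| ≤ (n : ℝ) ^ α) :
    Tendsto (fun n : ℕ => u n / n) atTop (𝓝 1) := by
  have hdecay : Tendsto (fun n : ℕ => (n : ℝ) ^ (α - 1)) atTop (𝓝 0) := by
    simpa [Function.comp_def] using
      (tendsto_rpow_neg_atTop (sub_pos.2 hα)).comp tendsto_natCast_atTop_atTop
  rw [tendsto_iff_norm_sub_tendsto_zero]
  refine squeeze_zero_norm' ?_ hdecay
  filter_upwards [hu, eventually_gt_atTop 0] with n hn hpos
  have hn0 : (0 : ℝ) < n := Nat.cast_pos.2 hpos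
  calc ‖‖u n / n - 1‖‖ = |u n - n| / n := by
        rw [norm_norm, Real.norm_eq_abs, div_sub_one hn0.ne', abs_div, abs_of_pos hn0]
    _ ≤ (n : ℝ) ^ α / n := by gcongr
    _ = (n : ℝ) ^ (α - 1) := by rw [Real.rpow_sub_one hn0.ne']

theorem ae_eventually_notMem_of_measure_le_rpow {Ω : Type*} [MeasurableSpace Ω]
    {P : Measure Ω} {s : ℕ → Set Ω} {c ζ : ℝ} (hζ : 1 < ζ)
    (hs : ∀ n : ℕ, P (s n) ≤ ENNReal.ofReal (c * (n : ℝ) ^ (-ζ))) :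
    ∀ᵐ ω ∂P, ∀ᶠ n in atTop, ω ∉ s n := by
  have hsum : Summable fun n : ℕ => c * (n : ℝ) ^ (-ζ) :=
    (Real.summable_nat_rpow.2 (by linarith)).mul_left c
  exact ae_eventually_notMem <|
    ne_top_of_le_ne_top hsum.tsum_ofReal_ne_top (ENNReal.tsum_le_tsum hs)

theorem ratio_tendsto_one_general
    {Ω : Type*} [MeasurableSpace Ω] (P : Measure Ω)
    (ζ : ℝ) (hζ : 1 < ζ)
    (Λ : ℝ → Ω → ℝ)
    (hmono : ∀ᵐ ω ∂P, MonotoneOn (fun t => Λ t ω) (Set.Ici (0 : ℝ)))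
    (hzero : ∀ᵐ ω ∂P, Λ 0 ω = 0)
    (hDIFF : ∀ ε : ℝ, 0 < ε → ∃ c : ℝ, ∀ a b : ℝ, 0 ≤ a → a ≤ b →
      P {ω | |Λ b ω - Λ a ω - (b - a)| > (b - a) ^ ((1 : ℝ) / 2 + ε)}
        ≤ ENNReal.ofReal (c * (b - a) ^ (-ζ))) :
    ∀ᵐ ω ∂P, Tendsto (fun t : ℝ => Λ t ω / t) atTop (nhds 1) := by
  obtain ⟨c, hc⟩ := hDIFF (1 / 4) (by norm_num)
  have hBC : ∀ᵐ ω ∂P, ∀ᶠ n : ℕ in atTop,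
      ω ∉ {ω | |Λ n ω - Λ 0 ω - (n - 0)| > ((n : ℝ) - 0) ^ ((1 : ℝ) / 2 + 1 / 4)} :=
    ae_eventually_notMem_of_measure_le_rpow hζ fun n => by
      simpa only [sub_zero] using hc 0 n le_rfl n.cast_nonneg
  filter_upwards [hmono, hzero, hBC] with ω hmono hzero hBC
  refine tendsto_div_atTop_of_monotoneOn_of_tendsto_nat hmono
    (tendsto_div_natCast_of_eventually_abs_sub_le_rpow (α := 1 / 2 + 1 / 4) (by norm_num) ?_)
  filter_upwards [hBC] with n hn
  simpa [hzero] using hn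

/-- If a process `Λ` with a.s. nondecreasing paths and `Λ(0) = 0`
satisfies condition (DIFF) with exponent `ζ > 1`, then almost surely
`Λ(t)/t → 1` as `t → ∞`. -/
theorem ratio_tendsto_one
    {Ω : Type*} [MeasurableSpace Ω] (P : Measure Ω) [IsProbabilityMeasure P]
    (ζ : ℝ) (hζ : 1 < ζ)
    (Λ : ℝ → Ω → ℝ)
    (hmono : ∀ᵐ ω ∂P, MonotoneOn (fun t => Λ t ω) (Set.Ici (0 : ℝ)))
    (hzero : ∀ᵐ ω ∂P, Λ 0 ω = 0)
    (hDIFF : ∀ ε : ℝ, 0 < ε → ∃ c : ℝ, ∀ a b : ℝ, 0 ≤ a → a ≤ b →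
      P {ω | |Λ b ω - Λ a ω - (b - a)| > (b - a) ^ ((1 : ℝ) / 2 + ε)}
        ≤ ENNReal.ofReal (c * (b - a) ^ (-ζ))) :
    ∀ᵐ ω ∂P, Tendsto (fun t : ℝ => Λ t ω / t) atTop (nhds 1) :=
  ratio_tendsto_one_general P ζ hζ Λ hmono hzero hDIFF
end

section
/- Let ζ > 0 and let Λ be a stochastic process on a probability space (Ω, P) with almost surely nondecreasing paths and Λ(0) = 0, satisfying condition (DIFF) with exponent ζ. Then for every ε > 0 there exist a finite constant C and a threshold a₀ ≥ 1 such that for all real T ≥ 2 and all a with a₀ ≤ a ≤ T: P( there exist reals s, s' with 0 ≤ s ≤ s' ≤ T, s' − s ≥ a, and |Λ(s') − Λ(s) − (s' − s)| > (s' − s)^{1/2 + ε} ) ≤ C · T² · a^{−ζ}. -/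
/-!
Fix `β = 1/2 + ε/2 < α = 1/2 + ε`. By monotonicity of the paths, a deviation of size `d^α` on a
window `[s, s']` of length `d` forces a deviation of size `d^α - 2 ≥ (d + 2)^β` on one of the two
integer windows `[⌊s⌋, ⌊s'⌋ + 1]` or `[⌊s⌋ + 1, ⌊s'⌋]`, once `d` is large. There are at most
`(T + 2)^2 ≤ 4 T^2` integer windows in `[0, T]`, each of length at least `a / 2`, and (DIFF) with
`ε / 2` bounds the probability of each deviation by `c (a / 2)^{-ζ}`; a union bound concludes.
-/

open MeasureTheory Filter Set

theorem tendsto_rpow_sub_const_mul_rpow_atTop {α β : ℝ} (K : ℝ) (hβ : 0 < β) (hβα : β < α) :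
    Tendsto (fun x : ℝ => x ^ α - K * x ^ β) atTop atTop := by
  have hgap : Tendsto (fun x : ℝ => x ^ (α - β) - K) atTop atTop :=
    tendsto_atTop_add_const_right _ _ (tendsto_rpow_atTop (sub_pos.mpr hβα))
  refine ((tendsto_rpow_atTop hβ).atTop_mul_atTop₀ hgap).congr' ?_
  filter_upwards [eventually_gt_atTop 0] with x hx
  rw [mul_sub, ← Real.rpow_add hx, add_sub_cancel]
  ring

theorem eventually_rpow_add_two_add_two_le_rpow {α β : ℝ} (hβ : 0 < β) (hβα : β < α) :
    ∀ᶠ d : ℝ in atTop, (d + 2) ^ β + 2 ≤ d ^ α := by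
  filter_upwards [(tendsto_rpow_sub_const_mul_rpow_atTop (2 ^ β) hβ hβα).eventually_ge_atTop 2,
    eventually_ge_atTop 2] with d hd hd2
  have : (d + 2) ^ β ≤ 2 ^ β * d ^ β := by
    rw [← Real.mul_rpow zero_le_two (by linarith)]
    exact Real.rpow_le_rpow (by linarith) (by linarith) hβ.le
  linarith

section Discretization

variable {f : ℝ → ℝ} {α β s s' : ℝ}

theorem floor_window_deviation_of_deviation_above (hf : MonotoneOn f (Ici 0)) (hβ : 0 ≤ β)
    (hs : 0 ≤ s) (hss' : s ≤ s') (hgap : (s' - s + 2) ^ β + 2 ≤ (s' - s) ^ α)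
    (hdev : (s' - s) ^ α < f s' - f s - (s' - s)) :
    s' - s ≤ (⌊s'⌋₊ + 1 : ℝ) - ⌊s⌋₊ ∧ ((⌊s'⌋₊ + 1 : ℝ) - ⌊s⌋₊) ^ β <
      |f (⌊s'⌋₊ + 1) - f ⌊s⌋₊ - ((⌊s'⌋₊ + 1 : ℝ) - ⌊s⌋₊)| := by
  have hp := Nat.floor_le hs
  have hp' := Nat.lt_floor_add_one s
  have hq := Nat.floor_le (hs.trans hss')
  have hq' := Nat.lt_floor_add_one s'
  have hfp : f ⌊s⌋₊ ≤ f s := hf (by simp) hs hp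
  have hfq : f s' ≤ f ↑(⌊s'⌋₊ + 1) :=
    hf (hs.trans hss') (mem_Ici.mpr (by positivity)) (by simpa using hq'.le)
  push_cast at hfq
  have hlen : ((⌊s'⌋₊ : ℝ) + 1 - ⌊s⌋₊) ^ β ≤ (s' - s + 2) ^ β :=
    Real.rpow_le_rpow (by linarith) (by linarith) hβ
  refine ⟨by linarith, lt_of_lt_of_le ?_ (le_abs_self _)⟩
  linarith

theorem floor_window_deviation_of_deviation_below (hf : MonotoneOn f (Ici 0)) (hβ : 0 ≤ β)
    (hs : 0 ≤ s) (hd : 2 ≤ s' - s) (hgap : (s' - s + 2) ^ β + 2 ≤ (s' - s) ^ α)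
    (hdev : f s' - f s - (s' - s) < -(s' - s) ^ α) :
    s' - s - 2 ≤ (⌊s'⌋₊ : ℝ) - (⌊s⌋₊ + 1) ∧ ((⌊s'⌋₊ : ℝ) - (⌊s⌋₊ + 1)) ^ β <
      |f ⌊s'⌋₊ - f (⌊s⌋₊ + 1) - ((⌊s'⌋₊ : ℝ) - (⌊s⌋₊ + 1))| := by
  have hs' : 0 ≤ s' := by linarith
  have hq := Nat.floor_le hs'
  have hq' := Nat.lt_floor_add_one s'
  have hp := Nat.lt_floor_add_one s
  have hp' := Nat.floor_le hs
  have hfq : f ⌊s'⌋₊ ≤ f s' := hf (by simp) hs' hq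
  have hfp : f s ≤ f ↑(⌊s⌋₊ + 1) := hf hs (mem_Ici.mpr (by positivity)) (by simpa using hp.le)
  push_cast at hfp
  have hlen : ((⌊s'⌋₊ : ℝ) - (⌊s⌋₊ + 1)) ^ β ≤ (s' - s + 2) ^ β :=
    Real.rpow_le_rpow (by linarith) (by linarith) hβ
  refine ⟨by linarith, lt_of_lt_of_le ?_ (neg_le_abs _)⟩
  linarith

theorem exists_nat_window_of_deviation (hf : MonotoneOn f (Ici 0)) (hβ : 0 ≤ β)
    (hs : 0 ≤ s) (hd : 2 ≤ s' - s) (hgap : (s' - s + 2) ^ β + 2 ≤ (s' - s) ^ α)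
    (hdev : (s' - s) ^ α < |f s' - f s - (s' - s)|) :
    ∃ p q : ℕ, p ≤ ⌊s'⌋₊ + 1 ∧ q ≤ ⌊s'⌋₊ + 1 ∧ s' - s - 2 ≤ (q : ℝ) - p ∧
      ((q : ℝ) - p) ^ β < |f q - f p - (q - p)| := by
  have hfloor : ⌊s⌋₊ ≤ ⌊s'⌋₊ := Nat.floor_le_floor (by linarith)
  rcases lt_abs.mp hdev with hup | hdown
  · obtain ⟨hlen, hdev'⟩ := floor_window_deviation_of_deviation_above hf hβ hs (by linarith) hgap hup
    exact ⟨⌊s⌋₊, ⌊s'⌋₊ + 1, by omega, le_rfl, by push_cast; linarith, by push_cast; exact hdev'⟩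
  · obtain ⟨hlen, hdev'⟩ :=
      floor_window_deviation_of_deviation_below hf hβ hs hd hgap (by linarith)
    exact ⟨⌊s⌋₊ + 1, ⌊s'⌋₊, by omega, by omega, by push_cast; linarith, by push_cast; exact hdev'⟩

end Discretization

theorem ofReal_mul_rpow_neg_le_max_mul {c ζ r d : ℝ} (hζ : 0 ≤ ζ) (hr : 0 < r) (hrd : r ≤ d) :
    ENNReal.ofReal (c * d ^ (-ζ)) ≤ ENNReal.ofReal (max c 0 * r ^ (-ζ)) := by
  refine ENNReal.ofReal_le_ofReal ?_
  calc c * d ^ (-ζ) ≤ max c 0 * d ^ (-ζ) :=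
        mul_le_mul_of_nonneg_right (le_max_left _ _) (Real.rpow_nonneg (hr.le.trans hrd) _)
    _ ≤ max c 0 * r ^ (-ζ) :=
        mul_le_mul_of_nonneg_left (Real.rpow_le_rpow_of_nonpos hr hrd (by linarith))
          (le_max_right _ _)

theorem measure_biUnion_range_prod_le {Ω : Type*} [MeasurableSpace Ω] (μ : Measure Ω)
    (B : ℕ → ℕ → Set Ω) (n : ℕ) {b : ENNReal} (hB : ∀ p q, μ (B p q) ≤ b) :
    μ (⋃ p ∈ Finset.range n, ⋃ q ∈ Finset.range n, B p q) ≤ n ^ 2 * b := by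
  calc μ (⋃ p ∈ Finset.range n, ⋃ q ∈ Finset.range n, B p q)
      ≤ ∑ p ∈ Finset.range n, ∑ q ∈ Finset.range n, μ (B p q) :=
        (measure_biUnion_finset_le _ _).trans
          (Finset.sum_le_sum fun p _ => measure_biUnion_finset_le _ _)
    _ ≤ ∑ _p ∈ Finset.range n, ∑ _q ∈ Finset.range n, b := 
        Finset.sum_le_sum fun p _ => Finset.sum_le_sum fun q _ => hB p q
    _ = n ^ 2 * b := by simp [sq, mul_assoc]

theorem half_rpow_neg {a : ℝ} (ha : 0 ≤ a) (ζ : ℝ) : (a / 2) ^ (-ζ) = 2 ^ ζ * a ^ (-ζ) := by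
  rw [Real.div_rpow ha zero_le_two, Real.rpow_neg zero_le_two, div_inv_eq_mul, mul_comm]

theorem natCast_floor_add_two_sq_mul_ofReal_le {T a b ζ : ℝ} (hT : 2 ≤ T) (ha : 0 ≤ a)
    (hb : 0 ≤ b) : ((⌊T⌋₊ + 2 : ℕ) : ENNReal) ^ 2 * ENNReal.ofReal (b * (a / 2) ^ (-ζ)) ≤
      ENNReal.ofReal (4 * 2 ^ ζ * b * T ^ 2 * a ^ (-ζ)) := by
  have hfloor := Nat.floor_le (zero_le_two.trans hT)
  have hsq : ((⌊T⌋₊ + 2 : ℕ) : ℝ) ^ 2 ≤ 4 * T ^ 2 := by push_cast; nlinarith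
  rw [← ENNReal.ofReal_natCast, ← ENNReal.ofReal_pow (Nat.cast_nonneg _),
    ← ENNReal.ofReal_mul (by positivity), half_rpow_neg ha]
  refine ENNReal.ofReal_le_ofReal ?_
  have := mul_le_mul_of_nonneg_right hsq (by positivity : 0 ≤ b * (2 ^ ζ * a ^ (-ζ)))
  linarith

theorem window_deviation_bound_general
    {Ω : Type*} [MeasurableSpace Ω] (P : Measure Ω) [IsProbabilityMeasure P]
    (ζ : ℝ) (hζ : 0 < ζ)
    (Λ : ℝ → Ω → ℝ)
    (hmono : ∀ᵐ ω ∂P, MonotoneOn (fun t => Λ t ω) (Set.Ici (0 : ℝ)))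
    (hDIFF : ∀ ε : ℝ, 0 < ε → ∃ c : ℝ, ∀ a b : ℝ, 0 ≤ a → a ≤ b →
      P {ω | |Λ b ω - Λ a ω - (b - a)| > (b - a) ^ ((1 : ℝ) / 2 + ε)}
        ≤ ENNReal.ofReal (c * (b - a) ^ (-ζ))) :
    ∀ ε : ℝ, 0 < ε → ∃ C : ℝ, ∃ a₀ : ℝ, 1 ≤ a₀ ∧
      ∀ T : ℝ, 2 ≤ T → ∀ a : ℝ, a₀ ≤ a → a ≤ T →
        P {ω | ∃ s s' : ℝ, 0 ≤ s ∧ s ≤ s' ∧ s' ≤ T ∧ a ≤ s' - s ∧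
              |Λ s' ω - Λ s ω - (s' - s)| > (s' - s) ^ ((1 : ℝ) / 2 + ε)}
          ≤ ENNReal.ofReal (C * T ^ 2 * a ^ (-ζ)) := by
  intro ε hε
  obtain ⟨c, hc⟩ := hDIFF (ε / 2) (half_pos hε)
  obtain ⟨d₀, hd₀⟩ := (eventually_rpow_add_two_add_two_le_rpow (α := 1 / 2 + ε)
    (β := 1 / 2 + ε / 2) (by positivity) (by linarith)).exists_forall_of_atTop
  refine ⟨4 * 2 ^ ζ * max c 0, max d₀ 4, le_max_of_le_right (by norm_num),
    fun T hT a ha₀ haT => ?_⟩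
  have ha4 : 4 ≤ a := le_of_max_le_right ha₀
  let B (p q : ℕ) : Set Ω := {ω | a / 2 ≤ (q : ℝ) - p ∧
    ((q : ℝ) - p) ^ ((1 : ℝ) / 2 + ε / 2) < |Λ q ω - Λ p ω - (q - p)|}
  have hcover : {ω | ∃ s s' : ℝ, 0 ≤ s ∧ s ≤ s' ∧ s' ≤ T ∧ a ≤ s' - s ∧
      |Λ s' ω - Λ s ω - (s' - s)| > (s' - s) ^ ((1 : ℝ) / 2 + ε)} ≤ᵐ[P]
      ⋃ p ∈ Finset.range (⌊T⌋₊ + 2), ⋃ q ∈ Finset.range (⌊T⌋₊ + 2), B p q := by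
    filter_upwards [hmono] with ω hω ⟨s, s', hs, hss', hs'T, hlen, hdev⟩
    obtain ⟨p, q, hp, hq, hpq, hdev'⟩ := exists_nat_window_of_deviation hω (by positivity) hs
      (by linarith) (hd₀ _ (le_of_max_le_left (ha₀.trans hlen))) hdev
    have hfloor : ⌊s'⌋₊ ≤ ⌊T⌋₊ := Nat.floor_le_floor hs'T
    exact mem_iUnion₂.mpr ⟨p, Finset.mem_range.mpr (by omega), mem_iUnion₂.mpr
      ⟨q, Finset.mem_range.mpr (by omega), by linarith, hdev'⟩⟩
  have hwindow (p q : ℕ) : P (B p q) ≤ ENNReal.ofReal (max c 0 * (a / 2) ^ (-ζ)) := by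
    by_cases hpq : a / 2 ≤ (q : ℝ) - p
    · exact (measure_mono fun ω hω => hω.2).trans <| (hc p q (by positivity) (by linarith)).trans
        (ofReal_mul_rpow_neg_le_max_mul hζ.le (by linarith) hpq)
    · simp [B, hpq]
  calc _ ≤ _ := measure_mono_ae hcover
    _ ≤ _ := measure_biUnion_range_prod_le P B _ hwindow
    _ ≤ _ := natCast_floor_add_two_sq_mul_ofReal_le hT (by linarith) (le_max_right _ _)

/-- Uniform-in-windows deviation bound. If a process `Λ` with
a.s. nondecreasing paths and `Λ(0) = 0` satisfies (DIFF) with exponent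
`ζ > 0`, then for every `ε > 0` there are `C` and a threshold `a₀ ≥ 1`
such that for all `T ≥ 2` and all `a₀ ≤ a ≤ T`,
`P(∃ 0 ≤ s ≤ s' ≤ T with s' − s ≥ a and |Λ(s') − Λ(s) − (s'−s)| > (s'−s)^{1/2+ε})
  ≤ C · T² · a^{−ζ}`. -/
theorem window_deviation_bound
    {Ω : Type*} [MeasurableSpace Ω] (P : Measure Ω) [IsProbabilityMeasure P]
    (ζ : ℝ) (hζ : 0 < ζ)
    (Λ : ℝ → Ω → ℝ)
    (hmono : ∀ᵐ ω ∂P, MonotoneOn (fun t => Λ t ω) (Set.Ici (0 : ℝ)))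
    (hzero : ∀ᵐ ω ∂P, Λ 0 ω = 0)
    (hDIFF : ∀ ε : ℝ, 0 < ε → ∃ c : ℝ, ∀ a b : ℝ, 0 ≤ a → a ≤ b →
      P {ω | |Λ b ω - Λ a ω - (b - a)| > (b - a) ^ ((1 : ℝ) / 2 + ε)}
        ≤ ENNReal.ofReal (c * (b - a) ^ (-ζ))) :
    ∀ ε : ℝ, 0 < ε → ∃ C : ℝ, ∃ a₀ : ℝ, 1 ≤ a₀ ∧
      ∀ T : ℝ, 2 ≤ T → ∀ a : ℝ, a₀ ≤ a → a ≤ T →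
        P {ω | ∃ s s' : ℝ, 0 ≤ s ∧ s ≤ s' ∧ s' ≤ T ∧ a ≤ s' - s ∧
              |Λ s' ω - Λ s ω - (s' - s)| > (s' - s) ^ ((1 : ℝ) / 2 + ε)}
          ≤ ENNReal.ofReal (C * T ^ 2 * a ^ (-ζ)) :=
  window_deviation_bound_general P ζ hζ Λ hmono hDIFF
end

section
/- Let ζ > 1, let ε > 0, let β ∈ (0, 1) satisfy β(ζ − 1) > 1, and let K > 0. Let (Λ_i)_{i∈ℤ} be a family of stochastic processes on a common probability space (Ω, P), each with almost surely nondecreasing paths and Λ_i(0) = 0, satisfying condition (DIFF) uniformly with exponent ζ. Then P( there exist i ∈ ℤ with |i| ≤ K·T and a real s ∈ [T^β, T] such that |Λ_i(s) − s| > s^{1/2 + ε} ) tends to 0 as the real parameter T tends to infinity. -/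
/-!
Work on the deterministic grid `a + k`, `k ∈ ℕ`, where `a = T^β`. By monotonicity of the paths,
a deviation larger than `(s + 1)^{1/2 + ε/2} + 1` at some `s ≥ a` forces a deviation larger than
`(a + k)^{1/2 + ε/2}` at one of the two grid points around `s`, and for large `s` the former
threshold is below `s^{1/2 + ε}`. Applying (DIFF) with exponent `ε/2` between `0` and `a + k` and
summing over `k` bounds the probability for one site by `c a^{-ρ} ∑ (k + 1)^{-(ζ - ρ)}` for any
`ρ < ζ - 1`; choosing `ρ > 1/β` and summing over the `O(T)` sites gives `O(T^{1 - βρ}) → 0`.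
-/

open MeasureTheory Filter Set Real Topology

theorem exists_nat_lt_abs_sub_of_lt_abs_sub {f : ℝ → ℝ} (hf : MonotoneOn f (Ici 0))
    {a e s : ℝ} (ha : 0 ≤ a) (he : 0 ≤ e) (has : a ≤ s)
    (hdev : (s + 1) ^ e + 1 < |f s - s|) :
    ∃ k : ℕ, (a + k) ^ e < |f (a + k) - (a + k)| := by
  by_contra! hgrid
  set k := ⌊s - a⌋₊
  have hk : a + k ≤ s := by linarith [Nat.floor_le (sub_nonneg.mpr has)]
  have hk' : s ≤ a + (k + 1) := by linarith [Nat.lt_floor_add_one (s - a)]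
  have hlow : |f (a + k) - (a + k)| ≤ (s + 1) ^ e :=
    (hgrid k).trans (rpow_le_rpow (by positivity) (by linarith) he)
  have hup : |f (a + (k + 1)) - (a + (k + 1))| ≤ (s + 1) ^ e := by
    refine le_trans ?_ (rpow_le_rpow (by positivity) (by linarith : a + (k + 1) ≤ s + 1) he)
    exact_mod_cast hgrid (k + 1)
  have hfk : f (a + k) ≤ f s :=
    hf (mem_Ici.mpr (by positivity)) (mem_Ici.mpr (by linarith)) hk
  have hfk' : f s ≤ f (a + (k + 1)) :=
    hf (mem_Ici.mpr (by linarith)) (mem_Ici.mpr (by positivity)) hk'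
  rw [abs_le] at hlow hup
  exact hdev.not_ge (abs_le.mpr ⟨by linarith, by linarith⟩)

theorem measure_exists_lt_abs_sub_le_tsum {Ω : Type*} [MeasurableSpace Ω] {P : Measure Ω}
    {X : ℝ → Ω → ℝ} (hmono : ∀ᵐ ω ∂P, MonotoneOn (fun t => X t ω) (Ici 0))
    {a e : ℝ} (ha : 0 ≤ a) (he : 0 ≤ e) :
    P {ω | ∃ s, a ≤ s ∧ (s + 1) ^ e + 1 < |X s ω - s|}
      ≤ ∑' k : ℕ, P {ω | (a + k) ^ e < |X (a + k) ω - (a + k)|} :=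
  calc _ ≤ P (⋃ k : ℕ, {ω | (a + k) ^ e < |X (a + k) ω - (a + k)|}) := by
        refine measure_mono_ae ?_
        filter_upwards [hmono] with ω hω ⟨s, has, hdev⟩
        exact mem_iUnion.mpr (exists_nat_lt_abs_sub_of_lt_abs_sub hω ha he has hdev)
    _ ≤ _ := measure_iUnion_le _

theorem rpow_neg_add_le_mul_rpow_neg {a x ρ p : ℝ} (ha : 1 ≤ a) (hx : 0 ≤ x) (hρ : 0 ≤ ρ)
    (hp : 0 ≤ p) : (a + x) ^ (-(ρ + p)) ≤ a ^ (-ρ) * (x + 1) ^ (-p) := by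
  rw [rpow_neg (by positivity), rpow_neg (by positivity), rpow_neg (by positivity), ← mul_inv]
  refine inv_anti₀ (by positivity) ?_
  calc a ^ ρ * (x + 1) ^ p ≤ (a + x) ^ ρ * (a + x) ^ p :=
        mul_le_mul (rpow_le_rpow (by positivity) (by linarith) hρ)
          (rpow_le_rpow (by positivity) (by linarith) hp) (by positivity) (by positivity)
    _ = (a + x) ^ (ρ + p) := (rpow_add (by positivity) _ _).symm

theorem measure_exists_lt_abs_sub_le {Ω : Type*} [MeasurableSpace Ω] {P : Measure Ω}
    {X : ℝ → Ω → ℝ} (hmono : ∀ᵐ ω ∂P, MonotoneOn (fun t => X t ω) (Ici 0))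
    (hzero : ∀ᵐ ω ∂P, X 0 ω = 0) {c e ζ ρ a : ℝ} (hc : 0 ≤ c)
    (hdiff : ∀ b, 0 ≤ b →
      P {ω | b ^ e < |X b ω - X 0 ω - b|} ≤ ENNReal.ofReal (c * b ^ (-ζ)))
    (he : 0 ≤ e) (hρ : 0 ≤ ρ) (hρζ : 1 < ζ - ρ) (ha : 1 ≤ a) :
    P {ω | ∃ s, a ≤ s ∧ (s + 1) ^ e + 1 < |X s ω - s|}
      ≤ ENNReal.ofReal (c * a ^ (-ρ) * ∑' k : ℕ, ((k : ℝ) + 1) ^ (-(ζ - ρ))) := by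
  have hsum : Summable fun k : ℕ => ((k : ℝ) + 1) ^ (-(ζ - ρ)) := by
    simpa using
      (summable_nat_add_iff 1).mpr (summable_nat_rpow.mpr (by linarith : -(ζ - ρ) < -1))
  calc _ ≤ ∑' k : ℕ, P {ω | (a + k) ^ e < |X (a + k) ω - (a + k)|} :=
        measure_exists_lt_abs_sub_le_tsum hmono (by linarith) he
    _ ≤ ∑' k : ℕ, ENNReal.ofReal (c * a ^ (-ρ) * ((k : ℝ) + 1) ^ (-(ζ - ρ))) := by
        refine ENNReal.tsum_le_tsum fun k => ?_
        have hb : 0 ≤ a + k := by positivity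
        calc _ ≤ P {ω | (a + k) ^ e < |X (a + k) ω - X 0 ω - (a + k)|} := by
              refine measure_mono_ae ?_
              filter_upwards [hzero] with ω hω (h : _ < _)
              show _ < _
              rwa [hω, sub_zero]
          _ ≤ ENNReal.ofReal (c * (a + k) ^ (-ζ)) := hdiff _ hb
          _ ≤ _ := by
              have h := rpow_neg_add_le_mul_rpow_neg ha k.cast_nonneg hρ (p := ζ - ρ)
                (by linarith)
              rw [add_sub_cancel] at h
              rw [mul_assoc]
              exact ENNReal.ofReal_le_ofReal (mul_le_mul_of_nonneg_left h hc)
    _ = _ := by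
        rw [← ENNReal.ofReal_tsum_of_nonneg (fun k => by positivity) (hsum.mul_left _),
          tsum_mul_left]

theorem card_Icc_neg_floor_le {x : ℝ} (hx : 0 ≤ x) :
    ((Finset.Icc (-⌊x⌋) ⌊x⌋).card : ℝ) ≤ 2 * x + 1 := by
  have hcard : (Finset.Icc (-⌊x⌋) ⌊x⌋).card = (2 * ⌊x⌋ + 1).toNat := by
    rw [Int.card_Icc]; congr 1; ring
  have hcast : (((2 * ⌊x⌋ + 1).toNat : ℤ) : ℝ) = 2 * ⌊x⌋ + 1 := by
    rw [Int.toNat_of_nonneg (by linarith [Int.floor_nonneg.mpr hx])]; push_cast; ring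
  rw [hcard]
  push_cast at hcast ⊢
  linarith [Int.floor_le x]

theorem measure_exists_site_lt_abs_sub_le {Ω : Type*} [MeasurableSpace Ω] {P : Measure Ω}
    {Λ : ℤ → ℝ → Ω → ℝ} (hmono : ∀ i, ∀ᵐ ω ∂P, MonotoneOn (fun t => Λ i t ω) (Ici 0))
    (hzero : ∀ i, ∀ᵐ ω ∂P, Λ i 0 ω = 0) {c e ζ ρ a x : ℝ} (hc : 0 ≤ c)
    (hdiff : ∀ b, 0 ≤ b → ∀ i,
      P {ω | b ^ e < |Λ i b ω - Λ i 0 ω - b|} ≤ ENNReal.ofReal (c * b ^ (-ζ)))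
    (he : 0 ≤ e) (hρ : 0 ≤ ρ) (hρζ : 1 < ζ - ρ) (ha : 1 ≤ a) (hx : 0 ≤ x) :
    P {ω | ∃ i : ℤ, (|i| : ℝ) ≤ x ∧ ∃ s, a ≤ s ∧ (s + 1) ^ e + 1 < |Λ i s ω - s|}
      ≤ ENNReal.ofReal
          ((2 * x + 1) * (c * a ^ (-ρ) * ∑' k : ℕ, ((k : ℝ) + 1) ^ (-(ζ - ρ)))) := by
  set B := c * a ^ (-ρ) * ∑' k : ℕ, ((k : ℝ) + 1) ^ (-(ζ - ρ))
  have hB : 0 ≤ B := by positivity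
  calc _ ≤ P (⋃ i ∈ Finset.Icc (-⌊x⌋) ⌊x⌋,
          {ω | ∃ s, a ≤ s ∧ (s + 1) ^ e + 1 < |Λ i s ω - s|}) := by
        refine measure_mono fun ω ⟨i, hi, hω⟩ => mem_biUnion ?_ hω
        rw [Finset.mem_coe, Finset.mem_Icc, ← abs_le, Int.le_floor]
        exact_mod_cast hi
    _ ≤ ∑ i ∈ Finset.Icc (-⌊x⌋) ⌊x⌋, ENNReal.ofReal B :=
        (measure_biUnion_finset_le _ _).trans <| Finset.sum_le_sum fun i _ =>
          measure_exists_lt_abs_sub_le (hmono i) (hzero i) hc (fun b hb => hdiff b hb i)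
            he hρ hρζ ha
    _ ≤ _ := by
        rw [Finset.sum_const, nsmul_eq_mul, ← ENNReal.ofReal_natCast,
          ← ENNReal.ofReal_mul (by positivity)]
        exact ENNReal.ofReal_le_ofReal
          (mul_le_mul_of_nonneg_right (card_Icc_neg_floor_le hx) hB)

theorem eventually_add_one_rpow_add_one_le_rpow {e f : ℝ} (he : 0 ≤ e) (hef : e < f) :
    ∀ᶠ s : ℝ in atTop, (s + 1) ^ e + 1 ≤ s ^ f := by
  filter_upwards [eventually_ge_atTop 1,
    (tendsto_rpow_atTop (sub_pos.mpr hef)).eventually (eventually_ge_atTop (2 ^ e + 1))]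
    with s hs hsf
  calc (s + 1) ^ e + 1 ≤ (2 * s) ^ e + s ^ e :=
        add_le_add (rpow_le_rpow (by linarith) (by linarith) he) (one_le_rpow hs he)
    _ = (2 ^ e + 1) * s ^ e := by rw [mul_rpow (by norm_num) (by linarith)]; ring
    _ ≤ s ^ (f - e) * s ^ e := by gcongr
    _ = s ^ f := by rw [← rpow_add (by linarith), sub_add_cancel]

theorem tendsto_mul_add_one_mul_rpow_neg {q : ℝ} (hq : 1 < q) (K : ℝ) :
    Tendsto (fun T : ℝ => (K * T + 1) * T ^ (-q)) atTop (𝓝 0) := by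
  have hlim := ((tendsto_rpow_neg_atTop (by linarith : 0 < q - 1)).const_mul K).add
    (tendsto_rpow_neg_atTop (by linarith : 0 < q))
  rw [mul_zero, zero_add] at hlim
  refine hlim.congr' ?_
  filter_upwards [eventually_gt_atTop 0] with T hT
  rw [show -(q - 1) = 1 + -q by ring, rpow_add hT, rpow_one]
  ring

theorem whp_no_deviation_on_window_general
    {Ω : Type*} [MeasurableSpace Ω] (P : Measure Ω)
    (ζ : ℝ) (ε : ℝ) (hε : 0 < ε)
    (β : ℝ) (hβ0 : 0 < β) (hβζ : 1 < β * (ζ - 1))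
    (K : ℝ) (hK : 0 < K)
    (Λ : ℤ → ℝ → Ω → ℝ)
    (hmono : ∀ i : ℤ, ∀ᵐ ω ∂P, MonotoneOn (fun t => Λ i t ω) (Set.Ici (0 : ℝ)))
    (hzero : ∀ i : ℤ, ∀ᵐ ω ∂P, Λ i 0 ω = 0)
    (hDIFF : ∀ ε' : ℝ, 0 < ε' → ∃ c : ℝ, ∀ a b : ℝ, 0 ≤ a → a ≤ b → ∀ i : ℤ,
      P {ω | |Λ i b ω - Λ i a ω - (b - a)| > (b - a) ^ ((1 : ℝ) / 2 + ε')}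
        ≤ ENNReal.ofReal (c * (b - a) ^ (-ζ))) :
    Tendsto
      (fun T : ℝ =>
        P {ω | ∃ i : ℤ, (|i| : ℝ) ≤ K * T ∧
            ∃ s : ℝ, T ^ β ≤ s ∧ s ≤ T ∧ |Λ i s ω - s| > s ^ ((1 : ℝ) / 2 + ε)})
      atTop (nhds 0) := by
  obtain ⟨c₀, hc₀⟩ := hDIFF (ε / 2) (half_pos hε)
  have hdiff : ∀ b : ℝ, 0 ≤ b → ∀ i, P {ω | b ^ (1 / 2 + ε / 2) < |Λ i b ω - Λ i 0 ω - b|}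
      ≤ ENNReal.ofReal (max c₀ 0 * b ^ (-ζ)) := fun b hb i => by
    have h := hc₀ 0 b le_rfl hb i
    rw [sub_zero] at h
    exact h.trans (ENNReal.ofReal_le_ofReal
      (mul_le_mul_of_nonneg_right (le_max_left _ _) (rpow_nonneg hb _)))
  obtain ⟨ρ, hβρ, hρζ⟩ : ∃ ρ, 1 / β < ρ ∧ ρ < ζ - 1 :=
    exists_between ((div_lt_iff₀ hβ0).mpr (by linarith [mul_comm β (ζ - 1)]))
  have hρ : 0 < ρ := (one_div_pos.mpr hβ0).trans hβρ
  have hq : 1 < β * ρ := by rwa [div_lt_iff₀ hβ0, mul_comm] at hβρ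
  obtain ⟨S, hS⟩ := eventually_atTop.mp (eventually_add_one_rpow_add_one_le_rpow
    (by positivity : 0 ≤ 1 / 2 + ε / 2) (by linarith : 1 / 2 + ε / 2 < 1 / 2 + ε))
  set C := max c₀ 0 * ∑' k : ℕ, ((k : ℝ) + 1) ^ (-(ζ - ρ)) with hC
  have hbound : ∀ᶠ T in atTop,
      P {ω | ∃ i : ℤ, (|i| : ℝ) ≤ K * T ∧
          ∃ s : ℝ, T ^ β ≤ s ∧ s ≤ T ∧ |Λ i s ω - s| > s ^ ((1 : ℝ) / 2 + ε)}
        ≤ ENNReal.ofReal (C * ((2 * K * T + 1) * T ^ (-(β * ρ)))) := by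
    filter_upwards [eventually_ge_atTop 0,
      (tendsto_rpow_atTop hβ0).eventually (eventually_ge_atTop (max S 1))] with T hT hTS
    refine (measure_mono ?_).trans ((measure_exists_site_lt_abs_sub_le hmono hzero
      (le_max_right c₀ 0) hdiff (by positivity) hρ.le (by linarith) (le_of_max_le_right hTS)
      (by positivity : 0 ≤ K * T)).trans (le_of_eq ?_))
    · rintro ω ⟨i, hi, s, hTs, -, hdev⟩
      exact ⟨i, hi, s, hTs, (hS s ((le_of_max_le_left hTS).trans hTs)).trans_lt hdev⟩
    · rw [← rpow_mul hT, mul_neg, hC]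
      congr 1
      ring
  have hlim :=
    ENNReal.tendsto_ofReal ((tendsto_mul_add_one_mul_rpow_neg hq (2 * K)).const_mul C)
  rw [mul_zero, ENNReal.ofReal_zero] at hlim
  exact tendsto_of_tendsto_of_tendsto_of_le_of_le' tendsto_const_nhds hlim
    (.of_forall fun _ => zero_le) hbound

/-- With high probability, all environment processes attached
to sites within distance `K·T` of the origin stay within their diffusive
deviation bands on the whole time window `[T^β, T]`, provided
`β(ζ − 1) > 1` and the family satisfies (DIFF) uniformly with exponent
`ζ > 1`. -/
theorem whp_no_deviation_on_window
    {Ω : Type*} [MeasurableSpace Ω] (P : Measure Ω) [IsProbabilityMeasure P]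
    (ζ : ℝ) (hζ : 1 < ζ) (ε : ℝ) (hε : 0 < ε)
    (β : ℝ) (hβ0 : 0 < β) (hβ1 : β < 1) (hβζ : 1 < β * (ζ - 1))
    (K : ℝ) (hK : 0 < K)
    (Λ : ℤ → ℝ → Ω → ℝ)
    (hmono : ∀ i : ℤ, ∀ᵐ ω ∂P, MonotoneOn (fun t => Λ i t ω) (Set.Ici (0 : ℝ)))
    (hzero : ∀ i : ℤ, ∀ᵐ ω ∂P, Λ i 0 ω = 0)
    (hDIFF : ∀ ε' : ℝ, 0 < ε' → ∃ c : ℝ, ∀ a b : ℝ, 0 ≤ a → a ≤ b → ∀ i : ℤ,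
      P {ω | |Λ i b ω - Λ i a ω - (b - a)| > (b - a) ^ ((1 : ℝ) / 2 + ε')}
        ≤ ENNReal.ofReal (c * (b - a) ^ (-ζ))) :
    Tendsto
      (fun T : ℝ =>
        P {ω | ∃ i : ℤ, (|i| : ℝ) ≤ K * T ∧
            ∃ s : ℝ, T ^ β ≤ s ∧ s ≤ T ∧ |Λ i s ω - s| > s ^ ((1 : ℝ) / 2 + ε)})
      atTop (nhds 0) :=
  whp_no_deviation_on_window_general P ζ ε hε β hβ0 hβζ K hK Λ hmono hzero hDIFF
end

section
/- Let Z be a Poisson random variable with parameter λ > 0, i.e. a random variable with values in ℕ whose law is the Poisson distribution with mean λ. Then for every real x with x ≥ e²·λ (where e is Euler's number), P(Z ≥ x) ≤ exp( −(x/2) · log(x/λ) ). -/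
open MeasureTheory ProbabilityTheory
open scoped NNReal Nat

/-!
Since `(k + m)! ≥ k! m!`, each tail weight of the Poisson law satisfies
`p(k + m) ≤ (λ^m / m!) p(k)`, so summing gives `P(Z ≥ m) ≤ λ^m / m!`. Together with
`m^m / m! ≤ e^m` this is at most `exp(m (1 - log(m/λ)))`. For `m = ⌈x⌉` we have
`log(m/λ) ≥ log(x/λ) ≥ 2`, hence `1 - log(m/λ) ≤ -log(x/λ)/2`, which gives the bound.
-/

namespace ProbabilityTheory

lemma poissonMeasure_singleton_add_le (r : ℝ≥0) (m k : ℕ) :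
    poissonMeasure r {k + m} ≤ ENNReal.ofReal (r ^ m / m !) * poissonMeasure r {k} := by
  have hfac : (m ! * k ! : ℝ) ≤ (k + m)! := by
    rw [mul_comm]
    exact_mod_cast Nat.le_of_dvd (Nat.factorial_pos _)
      (Nat.factorial_mul_factorial_dvd_factorial_add k m)
  rw [poissonMeasure_singleton, poissonMeasure_singleton, ← ENNReal.ofReal_mul (by positivity)]
  refine ENNReal.ofReal_le_ofReal ?_
  calc Real.exp (-r) * r ^ (k + m) / (k + m)!
      ≤ Real.exp (-r) * r ^ (k + m) / (m ! * k !) := by gcongr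
    _ = r ^ m / m ! * (Real.exp (-r) * r ^ k / k !) := by rw [pow_add]; field_simp

lemma poissonMeasure_Ici_le (r : ℝ≥0) (m : ℕ) :
    poissonMeasure r (Set.Ici m) ≤ ENNReal.ofReal (r ^ m / m !) := by
  have hIci : Set.Ici m = ⋃ k : ℕ, {k + m} := by
    ext n
    simpa [eq_comm] using (le_iff_exists_add' (a := m) (b := n))
  calc poissonMeasure r (Set.Ici m) ≤ ∑' k, poissonMeasure r {k + m} :=
        hIci ▸ measure_iUnion_le _
    _ ≤ ∑' k, ENNReal.ofReal (r ^ m / m !) * poissonMeasure r {k} :=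
      ENNReal.tsum_le_tsum fun k => poissonMeasure_singleton_add_le r m k
    _ = ENNReal.ofReal (r ^ m / m !) := by
      have htotal : ∑' k, poissonMeasure r {k} = 1 := by
        simpa using Measure.tsum_indicator_apply_singleton (poissonMeasure r) _ MeasurableSet.univ
      rw [ENNReal.tsum_mul_left, htotal, mul_one]

end ProbabilityTheory

namespace Real

lemma pow_div_factorial_le_exp_mul_one_sub_log {r : ℝ} (hr : 0 < r) (m : ℕ) :
    r ^ m / m ! ≤ exp (m * (1 - log (m / r))) := by
  rcases Nat.eq_zero_or_pos m with rfl | hm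
  · simp
  have hm' : (0 : ℝ) < m := by exact_mod_cast hm
  have hexp : exp (m * (1 - log (m / r))) = exp m * (r / m) ^ m := by
    rw [← exp_log (div_pos hr hm'), ← exp_nat_mul, ← exp_add, log_div hr.ne' hm'.ne',
      log_div hm'.ne' hr.ne']
    ring_nf
  calc r ^ m / m ! = (r / m) ^ m * ((m : ℝ) ^ m / m !) := by
        rw [div_pow]; field_simp
    _ ≤ (r / m) ^ m * exp m := by gcongr; exact pow_div_factorial_le_exp _ hm'.le m
    _ = exp (m * (1 - log (m / r))) := by rw [hexp, mul_comm]

lemma mul_one_sub_log_div_le {lam x y : ℝ} (hlam : 0 < lam) (hx : exp 2 * lam ≤ x)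
    (hxy : x ≤ y) : y * (1 - log (y / lam)) ≤ -(x / 2) * log (x / lam) := by
  have hx0 : 0 < x := lt_of_lt_of_le (by positivity) hx
  have hL : 2 ≤ log (x / lam) := by
    rwa [le_log_iff_exp_le (by positivity), le_div_iff₀ hlam]
  have hLy : log (x / lam) ≤ log (y / lam) := by gcongr
  nlinarith

end Real

theorem poisson_concentration_general
    {Ω : Type*} [MeasurableSpace Ω] (P : Measure Ω)
    (lam : NNReal) (hlam : 0 < lam)
    (Z : Ω → ℕ) (hZ : Measurable Z)
    (hlaw : P.map Z = poissonMeasure lam) :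
    ∀ x : ℝ, Real.exp 2 * lam ≤ x →
      P {ω | x ≤ (Z ω : ℝ)}
        ≤ ENNReal.ofReal (Real.exp (-(x / 2) * Real.log (x / lam))) := by
  intro x hx
  set m := ⌈x⌉₊
  have hlevel : {ω | x ≤ (Z ω : ℝ)} = Z ⁻¹' Set.Ici m := by
    ext ω
    simp [m, Nat.ceil_le]
  calc P {ω | x ≤ (Z ω : ℝ)} = poissonMeasure lam (Set.Ici m) := by
        rw [hlevel, ← hlaw, Measure.map_apply hZ measurableSet_Ici]
    _ ≤ ENNReal.ofReal (lam ^ m / m !) := poissonMeasure_Ici_le lam m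
    _ ≤ ENNReal.ofReal (Real.exp (m * (1 - Real.log (m / lam)))) :=
        ENNReal.ofReal_le_ofReal (Real.pow_div_factorial_le_exp_mul_one_sub_log hlam m)
    _ ≤ ENNReal.ofReal (Real.exp (-(x / 2) * Real.log (x / lam))) :=
        ENNReal.ofReal_le_ofReal <| Real.exp_le_exp.mpr <|
          Real.mul_one_sub_log_div_le hlam hx (Nat.le_ceil x)

/-- Poisson concentration, Lemma 1.2 of Penrose: if `Z` is a
Poisson random variable with parameter `λ > 0`, then for every `x ≥ e² λ`,
`P(Z ≥ x) ≤ exp(−(x/2) log(x/λ))`. -/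
theorem poisson_concentration
    {Ω : Type*} [MeasurableSpace Ω] (P : Measure Ω) [IsProbabilityMeasure P]
    (lam : NNReal) (hlam : 0 < lam)
    (Z : Ω → ℕ) (hZ : Measurable Z)
    (hlaw : P.map Z = poissonMeasure lam) :
    ∀ x : ℝ, Real.exp 2 * lam ≤ x →
      P {ω | x ≤ (Z ω : ℝ)}
        ≤ ENNReal.ofReal (Real.exp (-(x / 2) * Real.log (x / lam))) :=
  poisson_concentration_general P lam hlam Z hZ hlaw
end

section
/- Let (Y_n)_{n≥1} be a sequence of independent and identically distributed random variables that are almost surely positive, with E[Y₁] = 1 and E[exp(θ Y₁)] < ∞ for some θ > 0, and let Y₀ be a nonnegative random variable (on the same probability space) with E[exp(θ' Y₀)] < ∞ for some θ' > 0. Define S_n = Y₀ + Y₁ + ⋯ + Y_n and the counting process Λ(t) = inf{ n ∈ ℕ : S_n > t } for t ≥ 0. Then for every ε ∈ (0, 1/2) there exist constants c < ∞ and δ > 0 such that for all real t ≥ 1: P( |Λ(t) − t| ≥ t^{1/2 + ε} ) ≤ c · exp( −t^{δ} ). -/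
/-!
On `s ≤ θ / 2` the moment generating function of a nonnegative variable `X` with
`E[exp (θ X)] < ∞` is at most `exp (s E[X] + C s²)`, by `eˣ ≤ 1 + x + x² e^{max x 0}`. For
`0 ≤ s ≤ θ / 2`, Chernoff's bound then gives `exp (-s b + C m s²)` for both
`P(Y₁ + ⋯ + Y_m ≥ m + b)` and `P(Y₁ + ⋯ + Y_m ≤ m - b)`.

If `|Λ(t) - t| ≥ a`, then either the first `⌊t + a/2⌋` steps sum to at most `t`, or the delay
is at least `a/4`, or the first `⌊t - a/2⌋` steps sum to at least `t - a/4`. For `a = t^{1/2+ε}`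
and `s = κ t^{ε-1/2}` with `κ` small, each of these has probability `O(exp (-β t^{2ε}))`, and
`β t^{2ε} ≥ t^ε - 1/(4β)`.
-/

open MeasureTheory ProbabilityTheory Real Finset

theorem Real.exp_le_one_add_add_sq_mul_exp_max (x : ℝ) :
    exp x ≤ 1 + x + x ^ 2 * exp (max x 0) := by
  have hmax : 1 ≤ exp (max x 0) := one_le_exp (le_max_right x 0)
  rcases le_or_gt |x| 1 with hx | hx
  · have := abs_exp_sub_one_sub_id_le hx
    nlinarith [le_abs_self (exp x - 1 - x)]
  rcases lt_abs.1 hx with hx | hx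
  · rw [max_eq_left (by linarith)]
    have : exp x ≤ x ^ 2 * exp x := le_mul_of_one_le_left (exp_pos x).le (by nlinarith)
    linarith
  · nlinarith [exp_le_one_iff.2 (by linarith : x ≤ 0)]

theorem Real.exp_neg_mul_sq_le {β : ℝ} (hβ : 0 < β) (u : ℝ) :
    exp (-(β * u ^ 2)) ≤ exp (1 / (4 * β)) * exp (-u) := by
  rw [← exp_add, exp_le_exp]
  have hsq : 0 ≤ (2 * β * u - 1) ^ 2 / (4 * β) := by positivity
  have hid : (2 * β * u - 1) ^ 2 / (4 * β) = β * u ^ 2 - u + 1 / (4 * β) := by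
    field_simp; ring
  linarith

section

variable {Ω : Type*} [MeasurableSpace Ω] {μ : Measure Ω}

theorem integrable_exp_mul_of_nonneg_of_le [IsFiniteMeasure μ] {X : Ω → ℝ} {θ s : ℝ}
    (hXm : AEMeasurable X μ) (hX : 0 ≤ᵐ[μ] X)
    (hθ : Integrable (fun ω => exp (θ * X ω)) μ) (hs : s ≤ θ) :
    Integrable (fun ω => exp (s * X ω)) μ := by
  refine ((integrable_const 1).add hθ).mono' (hXm.const_mul s).exp.aestronglyMeasurable ?_
  filter_upwards [hX] with ω hω
  rw [norm_of_nonneg (exp_pos _).le, Pi.add_apply]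
  rcases le_total s 0 with h | h
  · have := exp_le_one_iff.2 (mul_nonpos_of_nonpos_of_nonneg h hω)
    linarith [exp_pos (θ * X ω)]
  · have := exp_le_exp.2 (mul_le_mul_of_nonneg_right hs hω)
    linarith

theorem exists_mgf_le_exp_mul_integral_add_sq [IsProbabilityMeasure μ] {X : Ω → ℝ} {θ : ℝ}
    (hX : 0 ≤ᵐ[μ] X) (hint : Integrable X μ) (hθ : 0 < θ)
    (hexp : Integrable (fun ω => exp (θ * X ω)) μ) :
    ∃ C, 0 ≤ C ∧ ∀ s ≤ θ / 2, mgf X μ s ≤ exp (s * μ[X] + C * s ^ 2) := by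
  have hF : Integrable (fun ω => X ω ^ 2 * exp (θ / 2 * X ω)) μ :=
    integrable_pow_mul_exp_of_integrable_exp_mul (t := θ / 2) (by positivity)
      (by simpa only [add_halves] using hexp) (by simp) 2
  refine ⟨∫ ω, X ω ^ 2 * exp (θ / 2 * X ω) ∂μ,
    integral_nonneg fun ω => mul_nonneg (sq_nonneg _) (exp_pos _).le, fun s hs => ?_⟩
  have hpt : (fun ω => exp (s * X ω)) ≤ᵐ[μ]
      fun ω => 1 + s * X ω + s ^ 2 * (X ω ^ 2 * exp (θ / 2 * X ω)) := by
    filter_upwards [hX] with ω hω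
    have hmax : max (s * X ω) 0 ≤ θ / 2 * X ω :=
      max_le (mul_le_mul_of_nonneg_right hs hω) (mul_nonneg (half_pos hθ).le hω)
    calc exp (s * X ω) ≤ 1 + s * X ω + (s * X ω) ^ 2 * exp (max (s * X ω) 0) :=
          exp_le_one_add_add_sq_mul_exp_max _
      _ ≤ 1 + s * X ω + s ^ 2 * (X ω ^ 2 * exp (θ / 2 * X ω)) := by
          rw [mul_pow, mul_assoc]; gcongr
  have hlin : Integrable (fun ω => 1 + s * X ω) μ := (integrable_const 1).add (hint.const_mul s)
  calc mgf X μ s ≤ ∫ ω, 1 + s * X ω + s ^ 2 * (X ω ^ 2 * exp (θ / 2 * X ω)) ∂μ :=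
        integral_mono_ae (integrable_exp_mul_of_nonneg_of_le hint.aemeasurable hX hexp
          (by linarith)) (hlin.add (hF.const_mul _)) hpt
    _ = (s * μ[X] + (∫ ω, X ω ^ 2 * exp (θ / 2 * X ω) ∂μ) * s ^ 2) + 1 := by
        rw [integral_add hlin (hF.const_mul _),
          integral_add (integrable_const 1) (hint.const_mul s), integral_const_mul,
          integral_const_mul]
        simp only [integral_const, probReal_univ, smul_eq_mul, mul_one]; ring
    _ ≤ _ := add_one_le_exp _

variable {Z : ℕ → Ω → ℝ}

theorem mgf_sum_range_eq_pow (hindep : iIndepFun Z μ) (hmeas : ∀ i, Measurable (Z i))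
    (hident : ∀ i, IdentDistrib (Z i) (Z 0) μ μ) (m : ℕ) (s : ℝ) :
    mgf (∑ i ∈ range m, Z i) μ s = mgf (Z 0) μ s ^ m := by
  rw [hindep.mgf_sum hmeas, prod_congr rfl fun i _ => mgf_congr_of_identDistrib _ _ (hident i) s,
    prod_const, card_range]

theorem integrable_exp_mul_sum_range (hindep : iIndepFun Z μ) (hmeas : ∀ i, Measurable (Z i))
    (hident : ∀ i, IdentDistrib (Z i) (Z 0) μ μ) {s : ℝ}
    (hint : Integrable (fun ω => exp (s * Z 0 ω)) μ) (m : ℕ) :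
    Integrable (fun ω => exp (s * (∑ i ∈ range m, Z i) ω)) μ :=
  have := hindep.isProbabilityMeasure
  hindep.integrable_exp_mul_sum hmeas fun i _ =>
    ((hident i).comp (measurable_const_mul s).exp).integrable_iff.2 hint

theorem measure_sum_range_ge_le (hindep : iIndepFun Z μ) (hmeas : ∀ i, Measurable (Z i))
    (hident : ∀ i, IdentDistrib (Z i) (Z 0) μ μ) {s ν C : ℝ} (hs : 0 ≤ s)
    (hint : Integrable (fun ω => exp (s * Z 0 ω)) μ)
    (hmgf : mgf (Z 0) μ s ≤ exp (s * ν + C * s ^ 2)) (m : ℕ) (b : ℝ) :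
    μ {ω | m * ν + b ≤ ∑ i ∈ range m, Z i ω} ≤ ENNReal.ofReal (exp (-s * b + C * m * s ^ 2)) := by
  have := hindep.isProbabilityMeasure
  rw [← ofReal_measureReal]
  refine ENNReal.ofReal_le_ofReal ?_
  calc μ.real {ω | m * ν + b ≤ ∑ i ∈ range m, Z i ω}
      ≤ exp (-s * (m * ν + b)) * mgf (∑ i ∈ range m, Z i) μ s := by
        simpa only [Finset.sum_apply] using measure_ge_le_exp_mul_mgf _ hs
          (integrable_exp_mul_sum_range hindep hmeas hident hint m)
    _ ≤ exp (-s * (m * ν + b)) * exp (s * ν + C * s ^ 2) ^ m := by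
        rw [mgf_sum_range_eq_pow hindep hmeas hident]; gcongr; exact mgf_nonneg
    _ = exp (-s * b + C * m * s ^ 2) := by
        rw [← exp_nat_mul, ← exp_add]; ring_nf

theorem measure_sum_range_le_le (hindep : iIndepFun Z μ) (hmeas : ∀ i, Measurable (Z i))
    (hident : ∀ i, IdentDistrib (Z i) (Z 0) μ μ) {s ν C : ℝ} (hs : 0 ≤ s)
    (hint : Integrable (fun ω => exp (-s * Z 0 ω)) μ)
    (hmgf : mgf (Z 0) μ (-s) ≤ exp (-s * ν + C * s ^ 2)) (m : ℕ) (b : ℝ) :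
    μ {ω | ∑ i ∈ range m, Z i ω ≤ m * ν - b} ≤ ENNReal.ofReal (exp (-s * b + C * m * s ^ 2)) := by
  have := hindep.isProbabilityMeasure
  rw [← ofReal_measureReal]
  refine ENNReal.ofReal_le_ofReal ?_
  calc μ.real {ω | ∑ i ∈ range m, Z i ω ≤ m * ν - b}
      ≤ exp (- -s * (m * ν - b)) * mgf (∑ i ∈ range m, Z i) μ (-s) := by
        simpa only [Finset.sum_apply] using measure_le_le_exp_mul_mgf _ (neg_nonpos.2 hs)
          (integrable_exp_mul_sum_range hindep hmeas hident hint m)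
    _ ≤ exp (- -s * (m * ν - b)) * exp (-s * ν + C * s ^ 2) ^ m := by
        rw [mgf_sum_range_eq_pow hindep hmeas hident]; gcongr; exact mgf_nonneg
    _ = exp (-s * b + C * m * s ^ 2) := by
        rw [← exp_nat_mul, ← exp_add]; ring_nf

theorem le_or_lt_of_le_abs_sInf_sub {S : ℕ → ℝ} (hS : Monotone S) {t a : ℝ} {m m' : ℕ}
    (hm : (m : ℝ) < t + a) (hm' : t - a < m' + 1)
    (h : a ≤ |(sInf {n | t < S n} : ℕ) - t|) : S m ≤ t ∨ t < S m' := by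
  by_contra! hcon
  have hle : sInf {n | t < S n} ≤ m := Nat.sInf_le hcon.1
  have hlt : m' < sInf {n | t < S n} := by
    by_contra! hge
    have hmem : sInf {n | t < S n} ∈ {n | t < S n} := Nat.sInf_mem ⟨m, hcon.1⟩
    exact (show t < S _ from hmem).not_ge ((hS hge).trans hcon.2)
  have hle' : ((sInf {n | t < S n} : ℕ) : ℝ) ≤ m := by exact_mod_cast hle
  have hlt' : (m' : ℝ) + 1 ≤ (sInf {n | t < S n} : ℕ) := by exact_mod_cast hlt
  exact h.not_gt (abs_sub_lt_iff.2 ⟨by linarith, by linarith⟩)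

variable {Y₀ : Ω → ℝ}

theorem le_abs_sInf_sub_ae_subset (hZ : ∀ i, 0 ≤ᵐ[μ] Z i) (hY₀ : 0 ≤ᵐ[μ] Y₀) {t a : ℝ}
    (ha : 0 < a) (hat : a ≤ t) :
    {ω | a ≤ |(sInf {n | t < ∑ i ∈ range n, Z i ω + Y₀ ω} : ℕ) - t|} ≤ᵐ[μ]
      ({ω | ∑ i ∈ range ⌊t + a / 2⌋₊, Z i ω ≤ ⌊t + a / 2⌋₊ - (a / 2 - 1)} ∪
        {ω | a / 4 ≤ Y₀ ω} ∪
        {ω | ⌊t - a / 2⌋₊ + a / 4 ≤ ∑ i ∈ range ⌊t - a / 2⌋₊, Z i ω} : Set Ω) := by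
  have hm := Nat.floor_le (a := t + a / 2) (by linarith)
  have hm₁ := Nat.lt_floor_add_one (t + a / 2)
  have hm' := Nat.floor_le (a := t - a / 2) (by linarith)
  have hm'₁ := Nat.lt_floor_add_one (t - a / 2)
  filter_upwards [hY₀, ae_all_iff.2 hZ] with ω hY₀ω hZω hω
  simp only [Pi.zero_apply] at hY₀ω hZω
  have hS : Monotone fun n => ∑ i ∈ range n, Z i ω + Y₀ ω :=
    monotone_nat_of_le_succ fun n => by simp only [sum_range_succ]; linarith [hZω n]
  rcases le_or_lt_of_le_abs_sInf_sub hS (m := ⌊t + a / 2⌋₊) (m' := ⌊t - a / 2⌋₊)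
    (by linarith) (by linarith) hω with h | h
  · exact Or.inl (Or.inl (by rw [Set.mem_ofPred_eq]; linarith))
  · by_cases hY : a / 4 ≤ Y₀ ω
    · exact Or.inl (Or.inr hY)
    · exact Or.inr (by rw [Set.mem_ofPred_eq]; linarith [not_le.1 hY])

theorem measure_le_abs_sInf_sub_le (hindep : iIndepFun Z μ)
    (hmeas : ∀ i, Measurable (Z i)) (hident : ∀ i, IdentDistrib (Z i) (Z 0) μ μ)
    (hZ : ∀ i, 0 ≤ᵐ[μ] Z i) (hY₀ : 0 ≤ᵐ[μ] Y₀) {θ θ' C s t a : ℝ}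
    (hθ : Integrable (fun ω => exp (θ * Z 0 ω)) μ) (hC₀ : 0 ≤ C)
    (hC : ∀ s ≤ θ / 2, mgf (Z 0) μ s ≤ exp (s + C * s ^ 2)) (hθ' : 0 ≤ θ')
    (hθ'int : Integrable (fun ω => exp (θ' * Y₀ ω)) μ) (hs : 0 ≤ s) (hsθ : s ≤ θ / 2)
    (ha : 0 < a) (hat : a ≤ t) :
    μ {ω | a ≤ |(sInf {n | t < ∑ i ∈ range n, Z i ω + Y₀ ω} : ℕ) - t|} ≤
      ENNReal.ofReal ((exp s + mgf Y₀ μ θ' + 1) *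
        exp (-min (s * a / 4 - 2 * C * t * s ^ 2) (θ' * a / 4))) := by
  have := hindep.isProbabilityMeasure
  set r := min (s * a / 4 - 2 * C * t * s ^ 2) (θ' * a / 4)
  have hr₁ : r ≤ s * a / 4 - 2 * C * t * s ^ 2 := min_le_left _ _
  have hr₂ : r ≤ θ' * a / 4 := min_le_right _ _
  have hint : ∀ s' ≤ θ, Integrable (fun ω => exp (s' * Z 0 ω)) μ := fun s' hs' =>
    integrable_exp_mul_of_nonneg_of_le (hmeas 0).aemeasurable (hZ 0) hθ hs'
  have hm := Nat.floor_le (a := t + a / 2) (by linarith)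
  have hm' := Nat.floor_le (a := t - a / 2) (by linarith)
  have hCs : 0 ≤ C * s ^ 2 := by positivity
  have hlower := measure_sum_range_le_le hindep hmeas hident hs (hint (-s) (by linarith))
    (ν := 1) (by simpa using hC (-s) (by linarith)) ⌊t + a / 2⌋₊ (a / 2 - 1)
  have hupper := measure_sum_range_ge_le hindep hmeas hident hs (hint s (by linarith))
    (ν := 1) (by simpa using hC s hsθ) ⌊t - a / 2⌋₊ (a / 4)
  have hdelay := measure_ge_le_exp_mul_mgf (a / 4) hθ' hθ'int
  simp only [mul_one] at hlower hupper
  have hm₂ := mul_le_mul_of_nonneg_left (show (⌊t + a / 2⌋₊ : ℝ) ≤ 2 * t by linarith) hCs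
  have hm'₂ := mul_le_mul_of_nonneg_left (show (⌊t - a / 2⌋₊ : ℝ) ≤ t by linarith) hCs
  have hmg := mul_nonneg (mgf_nonneg (X := Y₀) (μ := μ) (t := θ')) (exp_pos (-r)).le
  calc _ ≤ _ := measure_mono_ae (le_abs_sInf_sub_ae_subset hZ hY₀ ha hat)
    _ ≤ ENNReal.ofReal (exp s * exp (-r)) + ENNReal.ofReal (mgf Y₀ μ θ' * exp (-r)) +
          ENNReal.ofReal (exp (-r)) := by
        refine (measure_union_le _ _).trans
          (add_le_add ((measure_union_le _ _).trans (add_le_add ?_ ?_)) ?_)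
        · refine hlower.trans (ENNReal.ofReal_le_ofReal ?_)
          rw [← exp_add]
          exact exp_le_exp.2 (by nlinarith [mul_nonneg hs ha.le])
        · rw [← ofReal_measureReal]
          refine ENNReal.ofReal_le_ofReal (hdelay.trans ?_)
          rw [mul_comm]
          exact mul_le_mul_of_nonneg_left (exp_le_exp.2 (by linarith)) mgf_nonneg
        · refine hupper.trans (ENNReal.ofReal_le_ofReal (exp_le_exp.2 ?_))
          nlinarith
    _ = _ := by
        rw [← ENNReal.ofReal_add (by positivity) hmg,
          ← ENNReal.ofReal_add (add_nonneg (by positivity) hmg) (exp_pos _).le]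
        ring_nf

theorem measure_rpow_le_abs_sInf_sub_le (hindep : iIndepFun Z μ)
    (hmeas : ∀ i, Measurable (Z i)) (hident : ∀ i, IdentDistrib (Z i) (Z 0) μ μ)
    (hZ : ∀ i, 0 ≤ᵐ[μ] Z i) (hY₀ : 0 ≤ᵐ[μ] Y₀) {θ θ' C κ ε t : ℝ}
    (hθ : Integrable (fun ω => exp (θ * Z 0 ω)) μ) (hC₀ : 0 ≤ C)
    (hC : ∀ s ≤ θ / 2, mgf (Z 0) μ s ≤ exp (s + C * s ^ 2)) (hθ' : 0 ≤ θ')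
    (hθ'int : Integrable (fun ω => exp (θ' * Y₀ ω)) μ) (hκ : 0 < κ) (hκθ : κ ≤ θ / 2)
    (hκC : 16 * C * κ ≤ 1) (hε : ε ≤ 1 / 2) (ht : 1 ≤ t) :
    μ {ω | t ^ ((1 : ℝ) / 2 + ε) ≤ |(sInf {n | t < ∑ i ∈ range n, Z i ω + Y₀ ω} : ℕ) - t|} ≤
      ENNReal.ofReal ((exp κ + mgf Y₀ μ θ' + 1) *
        exp (-(min (κ / 8) (θ' / 4) * (t ^ ε) ^ 2))) := by
  have ht₀ : 0 < t := by linarith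
  set u := t ^ ε
  have hu₀ : 0 < u := rpow_pos_of_pos ht₀ ε
  have hu : u ≤ √t := by
    rw [sqrt_eq_rpow]; exact rpow_le_rpow_of_exponent_le ht hε
  have hsqrt : 0 < √t := sqrt_pos.2 ht₀
  have hs : κ * u / √t ≤ κ := by
    rw [div_le_iff₀ hsqrt]; exact mul_le_mul_of_nonneg_left hu hκ.le
  have hat : √t * u ≤ t := by
    calc √t * u ≤ √t * √t := by gcongr
      _ = t := mul_self_sqrt ht₀.le
  have hrate : min (κ / 8) (θ' / 4) * u ^ 2 ≤
      min (κ * u / √t * (√t * u) / 4 - 2 * C * t * (κ * u / √t) ^ 2) (θ' * (√t * u) / 4) := by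
    have e : κ * u / √t * (√t * u) / 4 - 2 * C * t * (κ * u / √t) ^ 2 =
        κ * u ^ 2 * (1 / 4 - 2 * C * κ) := by
      field_simp; rw [sq_sqrt ht₀.le]; ring
    rw [e]
    refine le_min ?_ ?_
    · nlinarith [mul_le_mul_of_nonneg_right (min_le_left (κ / 8) (θ' / 4)) (sq_nonneg u),
        mul_pos hκ (pow_pos hu₀ 2)]
    · nlinarith [mul_le_mul_of_nonneg_right (min_le_right (κ / 8) (θ' / 4)) (sq_nonneg u),
        mul_le_mul_of_nonneg_left hu (mul_nonneg hθ' hu₀.le)]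
  rw [rpow_add ht₀, ← sqrt_eq_rpow]
  refine (measure_le_abs_sInf_sub_le hindep hmeas hident hZ hY₀ hθ hC₀ hC hθ' hθ'int
    (s := κ * u / √t) (by positivity) (hs.trans hκθ) (by positivity) hat).trans
    (ENNReal.ofReal_le_ofReal ?_)
  gcongr
  exact add_nonneg (add_nonneg (exp_pos κ).le mgf_nonneg) zero_le_one

end

/-- stretched-exponential concentration of a delayed renewal
counting process. With `S n = Y 0 + Y 1 + ⋯ + Y n` and
`Λ(t) = inf {n : S n > t}`, where `(Y n)_{n ≥ 1}` are i.i.d., a.s. positive,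
with mean `1` and a finite exponential moment, and the delay `Y 0 ≥ 0` has a
finite exponential moment, for every `ε ∈ (0, 1/2)` there are `c < ∞` and
`δ > 0` such that `P(|Λ(t) − t| ≥ t^{1/2+ε}) ≤ c exp(−t^δ)` for all `t ≥ 1`. -/
theorem renewal_counting_concentration
    {Ω : Type*} [MeasurableSpace Ω] (P : Measure Ω) [IsProbabilityMeasure P]
    (Y : ℕ → Ω → ℝ)
    (hmeas : ∀ n, Measurable (Y n))
    (hindep : iIndepFun (fun n : ℕ => Y (n + 1)) P)
    (hident : ∀ n : ℕ, 1 ≤ n → IdentDistrib (Y n) (Y 1) P P)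
    (hpos : ∀ n : ℕ, 1 ≤ n → ∀ᵐ ω ∂P, 0 < Y n ω)
    (hint : Integrable (Y 1) P)
    (hmean : ∫ ω, Y 1 ω ∂P = 1)
    (hexp : ∃ θ : ℝ, 0 < θ ∧ Integrable (fun ω => Real.exp (θ * Y 1 ω)) P)
    (hY0 : ∀ᵐ ω ∂P, 0 ≤ Y 0 ω)
    (hexp0 : ∃ θ' : ℝ, 0 < θ' ∧ Integrable (fun ω => Real.exp (θ' * Y 0 ω)) P)
    (S : ℕ → Ω → ℝ) (hS : ∀ n ω, S n ω = ∑ i ∈ Finset.range (n + 1), Y i ω)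
    (Lam : ℝ → Ω → ℕ) (hLam : ∀ t ω, Lam t ω = sInf {n : ℕ | t < S n ω}) :
    ∀ ε : ℝ, 0 < ε → ε < 1 / 2 →
      ∃ c : ℝ, ∃ δ : ℝ, 0 < δ ∧ ∀ t : ℝ, 1 ≤ t →
        P {ω | t ^ ((1 : ℝ) / 2 + ε) ≤ |(Lam t ω : ℝ) - t|}
          ≤ ENNReal.ofReal (c * Real.exp (-t ^ δ)) := by
  intro ε hε hε'
  obtain ⟨θ, hθ, hθint⟩ := hexp
  obtain ⟨θ', hθ', hθ'int⟩ := hexp0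
  have hZ : ∀ i, 0 ≤ᵐ[P] Y (i + 1) := fun i => (hpos (i + 1) (by omega)).mono fun _ h => h.le
  obtain ⟨C, hC₀, hC⟩ := exists_mgf_le_exp_mul_integral_add_sq (hZ 0) hint hθ hθint
  simp only [hmean, mul_one] at hC
  set κ := min (θ / 2) (1 / (16 * (C + 1)))
  have hκ : 0 < κ := lt_min (by positivity) (by positivity)
  have hκC : κ * (16 * (C + 1)) ≤ 1 := (le_div_iff₀ (by positivity)).1 (min_le_right _ _)
  set β := min (κ / 8) (θ' / 4)
  have hβ : 0 < β := lt_min (by positivity) (by positivity)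
  refine ⟨(exp κ + mgf (Y 0) P θ' + 1) * exp (1 / (4 * β)), ε, hε, fun t ht => ?_⟩
  have hev : {ω | t ^ ((1 : ℝ) / 2 + ε) ≤ |(Lam t ω : ℝ) - t|} =
      {ω | t ^ ((1 : ℝ) / 2 + ε) ≤
        |(sInf {n | t < ∑ i ∈ range n, Y (i + 1) ω + Y 0 ω} : ℕ) - t|} := by
    simp only [hLam, hS, sum_range_succ']
  rw [hev]
  refine (measure_rpow_le_abs_sInf_sub_le (Z := fun i => Y (i + 1)) hindep (fun i => hmeas _)
    (fun i => hident _ (by omega)) hZ hY0 hθint hC₀ hC hθ'.le hθ'int hκ (min_le_left _ _)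
    (by nlinarith) hε'.le ht).trans (ENNReal.ofReal_le_ofReal ?_)
  rw [mul_assoc]
  gcongr
  · exact add_nonneg (add_nonneg (exp_pos κ).le mgf_nonneg) zero_le_one
  · exact exp_neg_mul_sq_le hβ _
end

section
/- Let Λ : [0, ∞) → ℝ be a nondecreasing function, let ε ∈ (0, 1/2], and let t ≥ 2 be a real number. Suppose that for every natural number j with j ≥ t − 1 one has |Λ(j) − j| ≤ (j − 1)^{1/2 + ε} − 1. Then for every real s ≥ t one has |Λ(s) − s| ≤ s^{1/2 + ε}. -/
/-- deterministic discretization lemma: if `Λ : [0,∞) → ℝ` is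
nondecreasing, `ε ∈ (0, 1/2]`, `t ≥ 2`, and for every natural `j ≥ t − 1`
one has `|Λ(j) − j| ≤ (j − 1)^{1/2+ε} − 1`, then `|Λ(s) − s| ≤ s^{1/2+ε}`
for every real `s ≥ t`. -/
theorem discretization_lemma
    (Lam : ℝ → ℝ) (hmono : MonotoneOn Lam (Set.Ici (0 : ℝ)))
    (ε : ℝ) (hε0 : 0 < ε) (hε1 : ε ≤ 1 / 2)
    (t : ℝ) (ht : 2 ≤ t)
    (hj : ∀ j : ℕ, t - 1 ≤ (j : ℝ) →
      |Lam (j : ℝ) - (j : ℝ)| ≤ ((j : ℝ) - 1) ^ ((1 : ℝ) / 2 + ε) - 1) :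
    ∀ s : ℝ, t ≤ s → |Lam s - s| ≤ s ^ ((1 : ℝ) / 2 + ε) := by
  intro s hs
  have hs0 : (0 : ℝ) ≤ s := le_trans (by linarith) hs
  set n : ℕ := ⌊s⌋₊ with hn
  have hn1 : (n : ℝ) ≤ s := Nat.floor_le hs0
  have hn2 : s < (n : ℝ) + 1 := Nat.lt_floor_add_one s
  have hn2' : (2 : ℝ) ≤ (n : ℝ) := by
    have : (2 : ℕ) ≤ n := Nat.le_floor (by exact_mod_cast le_trans ht hs)
    exact_mod_cast this
  have he0 : (0 : ℝ) ≤ 1 / 2 + ε := by linarith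
  have h1 := hj n (by linarith)
  have h2 := hj (n + 1) (by push_cast; linarith)
  push_cast at h2
  rw [abs_le] at h1 h2 ⊢
  have hm1 : Lam (n : ℝ) ≤ Lam s :=
    hmono (by simpa using (by positivity : (0:ℝ) ≤ (n:ℝ))) (by simpa using hs0) hn1
  have hm2 : Lam s ≤ Lam ((n : ℝ) + 1) :=
    hmono (by simpa using hs0) (by simp; positivity) hn2.le
  have hr1 : ((n : ℝ) - 1) ^ ((1:ℝ)/2 + ε) ≤ s ^ ((1:ℝ)/2 + ε) :=
    Real.rpow_le_rpow (by linarith) (by linarith) he0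
  have hr2 : ((n : ℝ) + 1 - 1) ^ ((1:ℝ)/2 + ε) ≤ s ^ ((1:ℝ)/2 + ε) :=
    Real.rpow_le_rpow (by linarith) (by linarith) he0
  constructor
  · linarith [h1.1, hm1]
  · linarith [h2.2, hm2]
end
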